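/- arXiv:2503.19210 — 4 statements merged into one kernel-verified Lean document; each statement's English description precedes it below -/
import Mathlib

section
/- Let f : ℝ → ℝ be measurable and of bounded variation. Then for every α with α ≥ 1/3, the nontangential Hardy–Littlewood maximal function M^α f satisfies Var(M^α f) ≤ Var(f). -/
open MeasureTheory

/-- The nontangential Hardy–Littlewood maximal function:
`M^α f(x) = sup { (1/(2t)) ∫_{y-t}^{y+t} |f(s)| ds : t > 0, y ∈ ℝ, |x − y| ≤ α t }`. -/
noncomputable def ntMax (α : ℝ) (f : ℝ → ℝ) (x : ℝ) : ℝ :=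
  sSup { a : ℝ | ∃ t : ℝ, 0 < t ∧ ∃ y : ℝ, |x - y| ≤ α * t ∧
    a = (1 / (2 * t)) * ∫ s in (y - t)..(y + t), |f s| }

namespace NtHL


noncomputable def V (f : ℝ → ℝ) : ℝ := (eVariationOn f Set.univ).toReal

noncomputable def C (f : ℝ → ℝ) : ℝ := |f 0| + V f

def S (α : ℝ) (f : ℝ → ℝ) (x : ℝ) : Set ℝ :=
  { a : ℝ | ∃ t : ℝ, 0 < t ∧ ∃ y : ℝ, |x - y| ≤ α * t ∧
    a = (1 / (2 * t)) * ∫ s in (y - t)..(y + t), |f s| }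

lemma ntMax_eq (α : ℝ) (f : ℝ → ℝ) (x : ℝ) : ntMax α f x = sSup (S α f x) := rfl

variable {f : ℝ → ℝ} {α : ℝ}

lemma V_nonneg (f : ℝ → ℝ) : 0 ≤ V f := ENNReal.toReal_nonneg

lemma abs_sub_le_V (hbv : eVariationOn f Set.univ ≠ ⊤) (s t : ℝ) :
    |f s - f t| ≤ V f := by
  have h := eVariationOn.edist_le f (Set.mem_univ s) (Set.mem_univ t)
  have h2 := ENNReal.toReal_mono hbv h
  rwa [edist_dist, ENNReal.toReal_ofReal dist_nonneg, Real.dist_eq] at h2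

lemma abs_le_C (hbv : eVariationOn f Set.univ ≠ ⊤) (s : ℝ) : |f s| ≤ C f := by
  have h := abs_sub_le_V hbv s 0
  have : |f s| ≤ |f 0| + |f s - f 0| := by
    have := abs_add_le (f 0) (f s - f 0)
    simpa using this
  simp only [C]; linarith

lemma C_nonneg (hbv : eVariationOn f Set.univ ≠ ⊤) : 0 ≤ C f :=
  le_trans (abs_nonneg _) (abs_le_C hbv 0)

lemma intervalIntegrable_abs (hf : Measurable f) (hbv : eVariationOn f Set.univ ≠ ⊤)
    (l r : ℝ) : IntervalIntegrable (fun s => |f s|) volume l r := by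
  rw [intervalIntegrable_iff]
  apply Measure.integrableOn_of_bounded (M := C f)
  · rw [Set.uIoc]; exact measure_Ioc_lt_top.ne
  · exact (hf.abs).aestronglyMeasurable
  · exact ae_of_all _ (fun s => by rw [Real.norm_eq_abs, abs_abs]; exact abs_le_C hbv s)

lemma integral_abs_nonneg {l r : ℝ} (h : l ≤ r) : 0 ≤ ∫ s in l..r, |f s| :=
  intervalIntegral.integral_nonneg h (fun s _ => abs_nonneg _)

lemma integral_abs_le (hf : Measurable f) (hbv : eVariationOn f Set.univ ≠ ⊤)
    {l r : ℝ} (h : l ≤ r) : ∫ s in l..r, |f s| ≤ C f * (r - l) := by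
  have h2 := intervalIntegral.integral_mono_on h (intervalIntegrable_abs hf hbv l r)
    (intervalIntegrable_const (c := C f)) (fun s _ => abs_le_C hbv s)
  simpa [mul_comm] using h2

lemma avg_mem (f : ℝ → ℝ) {x l r : ℝ} (hlr : l < r)
    (hadm : |x - (l + r) / 2| ≤ α * ((r - l) / 2)) :
    (1 / (r - l)) * ∫ s in l..r, |f s| ∈ S α f x := by
  refine ⟨(r - l) / 2, by linarith, (l + r) / 2, hadm, ?_⟩
  have h1 : (l + r) / 2 - (r - l) / 2 = l := by ring
  have h2 : (l + r) / 2 + (r - l) / 2 = r := by ring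
  have h3 : 2 * ((r - l) / 2) = r - l := by ring
  rw [h1, h2, h3]

lemma S_nonempty (hα : 1 / 3 ≤ α) (x : ℝ) : (S α f x).Nonempty :=
  ⟨_, ⟨1, one_pos, x, by simp; linarith, rfl⟩⟩

lemma S_bddAbove (hf : Measurable f) (hbv : eVariationOn f Set.univ ≠ ⊤) (x : ℝ) :
    BddAbove (S α f x) := by
  refine ⟨C f, fun a ha => ?_⟩
  obtain ⟨t, ht, y, _, rfl⟩ := ha
  have hint : ∫ s in (y - t)..(y + t), |f s| ≤ C f * (2 * t) := by
    have := integral_abs_le hf hbv (show y - t ≤ y + t by linarith)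
    simpa [show y + t - (y - t) = 2 * t by ring] using this
  have h2t : (0:ℝ) < 2 * t := by linarith
  rw [one_div, inv_mul_eq_div, div_le_iff₀ h2t]
  linarith [hint]

lemma le_ntMax (hf : Measurable f) (hbv : eVariationOn f Set.univ ≠ ⊤) {x a : ℝ}
    (ha : a ∈ S α f x) : a ≤ ntMax α f x :=
  le_csSup (S_bddAbove hf hbv x) ha

lemma ntMax_exists_gt (hf : Measurable f) (hbv : eVariationOn f Set.univ ≠ ⊤)
    (hα : 1 / 3 ≤ α) (x : ℝ) {ε : ℝ} (hε : 0 < ε) :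
    ∃ a ∈ S α f x, ntMax α f x - ε < a := by
  apply exists_lt_of_lt_csSup (S_nonempty hα x)
  rw [ntMax_eq] at *
  linarith [(by linarith : ntMax α f x - ε < ntMax α f x)]


section core
variable (hf : Measurable f) (hbv : eVariationOn f Set.univ ≠ ⊤) (hα : 1 / 3 ≤ α)
include hf hbv

/-- At any point, arbitrarily nearby (within a prescribed open interval around `x`),
there is a point where `|f|` is at most `ntMax α f x + ε`. -/
lemma exists_low (hα : 1 / 3 ≤ α) (x lo hi : ℝ) (hlo : lo < x) (hhi : x < hi)
    {ε : ℝ} (hε : 0 < ε) :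
    ∃ ξ, lo < ξ ∧ ξ < hi ∧ |f ξ| ≤ ntMax α f x + ε := by
  set t := min (x - lo) (hi - x) / 2 with ht
  have htlo : t ≤ (x - lo) / 2 := by
    rw [ht]; gcongr; exact min_le_left _ _
  have hthi : t ≤ (hi - x) / 2 := by
    rw [ht]; gcongr; exact min_le_right _ _
  have ht0 : 0 < t := by
    rw [ht]; have := lt_min (by linarith : (0:ℝ) < x - lo) (by linarith : (0:ℝ) < hi - x)
    linarith
  have hmem : (1 / ((x + t) - (x - t))) * ∫ s in (x - t)..(x + t), |f s| ∈ S α f x := by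
    apply avg_mem f (by linarith)
    have h1 : x - ((x - t) + (x + t)) / 2 = 0 := by ring
    rw [h1]
    have : ((x + t) - (x - t)) / 2 = t := by ring
    rw [this, abs_zero]
    positivity
  have havg := le_ntMax hf hbv hmem
  by_contra hcon
  push_neg at hcon
  have hbound : (ntMax α f x + ε) * ((x + t) - (x - t)) ≤ ∫ s in (x - t)..(x + t), |f s| := by
    have hmono := intervalIntegral.integral_mono_on (show x - t ≤ x + t by linarith)
      (intervalIntegrable_const (c := ntMax α f x + ε)) (intervalIntegrable_abs hf hbv _ _)
      (fun s hs => by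
        have hs1 : lo < s := by have := hs.1; linarith
        have hs2 : s < hi := by have := hs.2; linarith
        exact le_of_lt (hcon s hs1 hs2))
    have : (ntMax α f x + ε) * ((x + t) - (x - t)) = ∫ s in (x-t)..(x+t), (fun _ => ntMax α f x + ε) s := by
      rw [intervalIntegral.integral_const, smul_eq_mul]; ring
    rw [this]; exact hmono
  have h2t : (0:ℝ) < (x + t) - (x - t) := by linarith
  have : ntMax α f x + ε ≤ (1 / ((x + t) - (x - t))) * ∫ s in (x - t)..(x + t), |f s| := by
    rw [one_div, inv_mul_eq_div, le_div_iff₀ h2t]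
    linarith
  linarith

/-- Inside any nondegenerate interval there is an (interior) point where `|f|`
nearly exceeds the average. -/
lemma exists_high {l r A : ℝ} (hlr : l < r)
    (hA : A < (1 / (r - l)) * ∫ s in l..r, |f s|) :
    ∃ c, l < c ∧ c < r ∧ A ≤ |f c| := by
  by_contra hcon
  push_neg at hcon
  have hae : (fun s => |f s|) ≤ᵐ[volume.restrict (Set.Icc l r)] (fun _ => A) := by
    have hne : ∀ᵐ (s : ℝ), s ≠ l ∧ s ≠ r := by
      have h1 : ∀ᵐ (s : ℝ), s ≠ l := by
        rw [Filter.eventually_iff, mem_ae_iff]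
        have : {x : ℝ | x ≠ l}ᶜ = {l} := by ext z; simp
        rw [this]; exact Real.volume_singleton
      have h2 : ∀ᵐ (s : ℝ), s ≠ r := by
        rw [Filter.eventually_iff, mem_ae_iff]
        have : {x : ℝ | x ≠ r}ᶜ = {r} := by ext z; simp
        rw [this]; exact Real.volume_singleton
      filter_upwards [h1, h2] with s hs1 hs2; exact ⟨hs1, hs2⟩
    filter_upwards [ae_restrict_of_ae hne, ae_restrict_mem measurableSet_Icc] with s hs hsm
    exact (hcon s (lt_of_le_of_ne hsm.1 (Ne.symm hs.1)) (lt_of_le_of_ne hsm.2 hs.2)).le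
  have hmono := intervalIntegral.integral_mono_ae_restrict hlr.le
    (intervalIntegrable_abs hf hbv l r) (intervalIntegrable_const (c := A)) hae
  rw [intervalIntegral.integral_const, smul_eq_mul] at hmono
  have h2 : (0:ℝ) < r - l := by linarith
  have : (1 / (r - l)) * ∫ s in l..r, |f s| ≤ A := by
    rw [one_div, inv_mul_eq_div, div_le_iff₀ h2]
    linarith
  linarith

/-- Splitting an average into three adjacent pieces. -/
lemma avg_le_of_pieces {l p q r K : ℝ} (hlp : l ≤ p) (hpq : p ≤ q) (hqr : q ≤ r) (hlr : l < r)
    (h1 : l < p → (1 / (p - l)) * ∫ s in l..p, |f s| ≤ K)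
    (h2 : p < q → (1 / (q - p)) * ∫ s in p..q, |f s| ≤ K)
    (h3 : q < r → (1 / (r - q)) * ∫ s in q..r, |f s| ≤ K) :
    (1 / (r - l)) * ∫ s in l..r, |f s| ≤ K := by
  have hsplit : ∫ s in l..r, |f s| =
      (∫ s in l..p, |f s|) + (∫ s in p..q, |f s|) + (∫ s in q..r, |f s|) := by
    rw [intervalIntegral.integral_add_adjacent_intervals
        (intervalIntegrable_abs hf hbv l p) (intervalIntegrable_abs hf hbv p q),
      intervalIntegral.integral_add_adjacent_intervals
        (intervalIntegrable_abs hf hbv l q) (intervalIntegrable_abs hf hbv q r)]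
  have e1 : ∫ s in l..p, |f s| ≤ K * (p - l) := by
    rcases eq_or_lt_of_le hlp with h | h
    · rw [← h]; simp
    · have := h1 h
      have hpl : (0:ℝ) < p - l := by linarith
      rw [one_div, inv_mul_eq_div, div_le_iff₀ hpl] at this
      linarith
  have e2 : ∫ s in p..q, |f s| ≤ K * (q - p) := by
    rcases eq_or_lt_of_le hpq with h | h
    · rw [← h]; simp
    · have := h2 h
      have hh : (0:ℝ) < q - p := by linarith
      rw [one_div, inv_mul_eq_div, div_le_iff₀ hh] at this
      linarith
  have e3 : ∫ s in q..r, |f s| ≤ K * (r - q) := by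
    rcases eq_or_lt_of_le hqr with h | h
    · rw [← h]; simp
    · have := h3 h
      have hh : (0:ℝ) < r - q := by linarith
      rw [one_div, inv_mul_eq_div, div_le_iff₀ hh] at this
      linarith
  have h2' : (0:ℝ) < r - l := by linarith
  rw [one_div, inv_mul_eq_div, div_le_iff₀ h2']
  rw [hsplit]
  nlinarith [e1, e2, e3]

end core

lemma adm_left {z l e : ℝ} (h1a : 0 < 1 + α) (hα0 : 0 ≤ α) (hα1 : α ≤ 1) (hlz : l < z)
    (he : (1 + α) * e = (1 - α) * (z - l)) :
    l < z + e ∧ |z - (l + (z + e)) / 2| ≤ α * ((z + e - l) / 2) := by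
  have he0 : 0 ≤ e := by nlinarith
  have hde : e ≤ z - l := by nlinarith
  refine ⟨by linarith, ?_⟩
  rw [abs_of_nonneg (by linarith)]
  nlinarith [he]

lemma adm_right {z r e : ℝ} (h1a : 0 < 1 + α) (hα0 : 0 ≤ α) (hα1 : α ≤ 1) (hzr : z < r)
    (he : (1 + α) * e = (1 - α) * (r - z)) :
    z - e < r ∧ |z - ((z - e) + r) / 2| ≤ α * ((r - (z - e)) / 2) := by
  have he0 : 0 ≤ e := by nlinarith
  have hde : e ≤ r - z := by nlinarith
  refine ⟨by linarith, ?_⟩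
  rw [abs_of_nonpos (by linarith)]
  nlinarith [he]

section core2
variable (hf : Measurable f) (hbv : eVariationOn f Set.univ ≠ ⊤) (hα : 1 / 3 ≤ α)
include hf hbv hα

lemma left_piece {y t a : ℝ} (ht : 0 < t) (ha : a < y - α * t) :
    ∃ pl, y - t ≤ pl ∧ a ≤ pl ∧
      (pl = y - t ∨ (y - t < a ∧ (1 + α) * (pl - (y - t)) = 2 * (a - (y - t)))) ∧
      (y - t < pl → (1 / (pl - (y - t))) * ∫ s in (y - t)..pl, |f s| ≤ ntMax α f a) := by
  have hα0 : (0:ℝ) ≤ α := by linarith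
  have h1a : (0:ℝ) < 1 + α := by linarith
  rcases le_or_gt a (y - t) with hA | hA
  · exact ⟨y - t, le_rfl, hA, Or.inl rfl, fun h => absurd h (lt_irrefl _)⟩
  · have hα1 : α < 1 := by nlinarith
    set e := (1 - α) * (a - (y - t)) / (1 + α) with hedef
    have he : (1 + α) * e = (1 - α) * (a - (y - t)) := by
      rw [hedef]; field_simp
    obtain ⟨hlt, hadm⟩ := adm_left (z := a) (l := y - t) (e := e) h1a hα0 hα1.le hA he
    refine ⟨a + e, by linarith, by nlinarith, Or.inr ⟨hA, by linear_combination he⟩, ?_⟩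
    intro hlt2
    exact le_ntMax hf hbv (avg_mem f hlt2 hadm)

lemma right_piece {y t b : ℝ} (ht : 0 < t) (hb : y + α * t < b) :
    ∃ qr, qr ≤ y + t ∧ qr ≤ b ∧
      (qr = y + t ∨ (b < y + t ∧ (1 + α) * ((y + t) - qr) = 2 * ((y + t) - b))) ∧
      (qr < y + t → (1 / ((y + t) - qr)) * ∫ s in qr..(y + t), |f s| ≤ ntMax α f b) := by
  have hα0 : (0:ℝ) ≤ α := by linarith
  have h1a : (0:ℝ) < 1 + α := by linarith
  rcases le_or_gt (y + t) b with hB | hB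
  · exact ⟨y + t, le_rfl, hB, Or.inl rfl, fun h => absurd h (lt_irrefl _)⟩
  · have hα1 : α < 1 := by nlinarith
    set e := (1 - α) * ((y + t) - b) / (1 + α) with hedef
    have he : (1 + α) * e = (1 - α) * ((y + t) - b) := by
      rw [hedef]; field_simp
    obtain ⟨hlt, hadm⟩ := adm_right (z := b) (r := y + t) (e := e) h1a hα0 hα1.le hB he
    refine ⟨b - e, by nlinarith, by nlinarith, Or.inr ⟨hB, by linear_combination he⟩, ?_⟩
    intro hlt2
    exact le_ntMax hf hbv (avg_mem f hlt2 hadm)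

/-- Two-sided maximum principle for the nontangential maximal function, `α ≥ 1/3`. -/
lemma star {a x b : ℝ} (hax : a < x) (hxb : x < b) {ε : ℝ} (hε : 0 < ε) :
    ∃ c, a < c ∧ c < b ∧
      ntMax α f x ≤ max (max (ntMax α f a) (ntMax α f b)) |f c| + ε := by
  obtain ⟨A, hAS, hgt⟩ := ntMax_exists_gt hf hbv hα x (half_pos hε)
  obtain ⟨t, ht, y, hxy, rfl⟩ := hAS
  set A := (1 / (2 * t)) * ∫ s in (y - t)..(y + t), |f s| with hAdef
  have hxy1 : y - α * t ≤ x := by have := (abs_le.mp hxy).1; linarith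
  have hxy2 : x ≤ y + α * t := by have := (abs_le.mp hxy).2; linarith
  by_cases hca : |a - y| ≤ α * t
  · have : A ∈ S α f a := ⟨t, ht, y, hca, rfl⟩
    have h1 := le_ntMax hf hbv this
    refine ⟨x, hax, hxb, ?_⟩
    have h2 : ntMax α f a ≤ max (max (ntMax α f a) (ntMax α f b)) |f x| :=
      le_trans (le_max_left _ _) (le_max_left _ _)
    linarith
  by_cases hcb : |b - y| ≤ α * t
  · have : A ∈ S α f b := ⟨t, ht, y, hcb, rfl⟩
    have h1 := le_ntMax hf hbv this
    refine ⟨x, hax, hxb, ?_⟩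
    have h2 : ntMax α f b ≤ max (max (ntMax α f a) (ntMax α f b)) |f x| :=
      le_trans (le_max_right _ _) (le_max_left _ _)
    linarith
  -- both endpoints outside the admissibility cone
  have ha' : a < y - α * t := by
    rcases lt_or_ge a (y - α * t) with h | h
    · exact h
    · exfalso; apply hca; rw [abs_le]; constructor <;> nlinarith
  have hb' : y + α * t < b := by
    rcases lt_or_ge (y + α * t) b with h | h
    · exact h
    · exfalso; apply hcb; rw [abs_le]; constructor <;> nlinarith
  obtain ⟨pl, hpl1, hpl2, hpl3, hpl4⟩ := left_piece hf hbv hα ht ha'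
  obtain ⟨qr, hqr1, hqr2, hqr3, hqr4⟩ := right_piece hf hbv hα ht hb'
  have hab2 : 2 * (α * t) < b - a := by linarith
  have hpq : pl ≤ qr := by
    rcases hpl3 with h1 | ⟨h1a', h1b⟩ <;> rcases hqr3 with h2 | ⟨h2a, h2b⟩
    · rw [h1, h2]; linarith
    · rw [h1]; nlinarith
    · rw [h2]; nlinarith
    · nlinarith
  have hAeq : A = (1 / ((y + t) - (y - t))) * ∫ s in (y - t)..(y + t), |f s| := by
    rw [hAdef, show (y + t) - (y - t) = 2 * t by ring]
  -- choose the interior witness point c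
  by_cases hmq : pl < qr
  · obtain ⟨c, hc1, hc2, hc3⟩ := exists_high hf hbv hmq
      (show (1 / (qr - pl)) * (∫ s in pl..qr, |f s|) - ε / 2 <
          (1 / (qr - pl)) * ∫ s in pl..qr, |f s| by linarith)
    refine ⟨c, lt_of_le_of_lt hpl2 hc1, lt_of_lt_of_le hc2 hqr2, ?_⟩
    have hKb : A ≤ max (max (ntMax α f a) (ntMax α f b)) |f c| + ε / 2 := by
      rw [hAeq]
      apply avg_le_of_pieces hf hbv hpl1 hpq hqr1 (by linarith)
      · intro h
        have := hpl4 h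
        have h2 : ntMax α f a ≤ max (max (ntMax α f a) (ntMax α f b)) |f c| :=
          le_trans (le_max_left _ _) (le_max_left _ _)
        linarith
      · intro h
        have h2 : |f c| ≤ max (max (ntMax α f a) (ntMax α f b)) |f c| := le_max_right _ _
        linarith
      · intro h
        have := hqr4 h
        have h2 : ntMax α f b ≤ max (max (ntMax α f a) (ntMax α f b)) |f c| :=
          le_trans (le_max_right _ _) (le_max_left _ _)
        linarith
    linarith
  · have hpq' : pl = qr := le_antisymm hpq (le_of_not_gt hmq)
    refine ⟨x, hax, hxb, ?_⟩
    have hKb : A ≤ max (max (ntMax α f a) (ntMax α f b)) |f x| + ε / 2 := by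
      rw [hAeq]
      apply avg_le_of_pieces hf hbv hpl1 hpq hqr1 (by linarith)
      · intro h
        have := hpl4 h
        have h2 : ntMax α f a ≤ max (max (ntMax α f a) (ntMax α f b)) |f x| :=
          le_trans (le_max_left _ _) (le_max_left _ _)
        linarith
      · intro h; rw [hpq'] at h; exact absurd h (lt_irrefl _)
      · intro h
        have := hqr4 h
        have h2 : ntMax α f b ≤ max (max (ntMax α f a) (ntMax α f b)) |f x| :=
          le_trans (le_max_right _ _) (le_max_left _ _)
        linarith
    linarith

/-- One-sided (left boundary) maximum principle. -/
lemma starL {x b : ℝ} (hxb : x < b) {ε : ℝ} (hε : 0 < ε) :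
    ∃ c, c < b ∧ ntMax α f x ≤ max (ntMax α f b) |f c| + ε := by
  obtain ⟨A, hAS, hgt⟩ := ntMax_exists_gt hf hbv hα x (half_pos hε)
  obtain ⟨t, ht, y, hxy, rfl⟩ := hAS
  set A := (1 / (2 * t)) * ∫ s in (y - t)..(y + t), |f s| with hAdef
  have hxy1 : y - α * t ≤ x := by have := (abs_le.mp hxy).1; linarith
  have hxy2 : x ≤ y + α * t := by have := (abs_le.mp hxy).2; linarith
  by_cases hcb : |b - y| ≤ α * t
  · have : A ∈ S α f b := ⟨t, ht, y, hcb, rfl⟩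
    have h1 := le_ntMax hf hbv this
    exact ⟨x, hxb, by have := le_max_left (ntMax α f b) |f x|; linarith⟩
  have hb' : y + α * t < b := by
    rcases lt_or_ge (y + α * t) b with h | h
    · exact h
    · exfalso; apply hcb; rw [abs_le]; constructor <;> nlinarith
  obtain ⟨qr, hqr1, hqr2, hqr3, hqr4⟩ := right_piece hf hbv hα ht hb'
  have hlq : y - t ≤ qr := by
    rcases hqr3 with h | ⟨h2a, h2b⟩
    · rw [h]; linarith
    · nlinarith
  have hAeq : A = (1 / ((y + t) - (y - t))) * ∫ s in (y - t)..(y + t), |f s| := by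
    rw [hAdef, show (y + t) - (y - t) = 2 * t by ring]
  by_cases hmq : y - t < qr
  · obtain ⟨c, hc1, hc2, hc3⟩ := exists_high hf hbv hmq
      (show (1 / (qr - (y - t))) * (∫ s in (y - t)..qr, |f s|) - ε / 2 <
          (1 / (qr - (y - t))) * ∫ s in (y - t)..qr, |f s| by linarith)
    refine ⟨c, lt_of_lt_of_le hc2 hqr2, ?_⟩
    have hKb : A ≤ max (ntMax α f b) |f c| + ε / 2 := by
      rw [hAeq]
      apply avg_le_of_pieces hf hbv (le_refl (y - t)) hlq hqr1 (by linarith)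
      · intro h; exact absurd h (lt_irrefl _)
      · intro h
        have h2 : |f c| ≤ max (ntMax α f b) |f c| := le_max_right _ _
        linarith
      · intro h
        have := hqr4 h
        have h2 : ntMax α f b ≤ max (ntMax α f b) |f c| := le_max_left _ _
        linarith
    linarith
  · have hq' : qr = y - t := le_antisymm (le_of_not_gt hmq) hlq
    refine ⟨b - 1, by linarith, ?_⟩
    have hKb : A ≤ max (ntMax α f b) |f (b - 1)| + ε / 2 := by
      rw [hAeq]
      apply avg_le_of_pieces hf hbv (le_refl (y - t)) hlq hqr1 (by linarith)
      · intro h; exact absurd h (lt_irrefl _)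
      · intro h; rw [hq'] at h; exact absurd h (lt_irrefl _)
      · intro h
        have := hqr4 h
        have h2 : ntMax α f b ≤ max (ntMax α f b) |f (b - 1)| := le_max_left _ _
        linarith
    linarith

/-- One-sided (right boundary) maximum principle. -/
lemma starR {a x : ℝ} (hax : a < x) {ε : ℝ} (hε : 0 < ε) :
    ∃ c, a < c ∧ ntMax α f x ≤ max (ntMax α f a) |f c| + ε := by
  obtain ⟨A, hAS, hgt⟩ := ntMax_exists_gt hf hbv hα x (half_pos hε)
  obtain ⟨t, ht, y, hxy, rfl⟩ := hAS
  set A := (1 / (2 * t)) * ∫ s in (y - t)..(y + t), |f s| with hAdef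
  have hxy1 : y - α * t ≤ x := by have := (abs_le.mp hxy).1; linarith
  have hxy2 : x ≤ y + α * t := by have := (abs_le.mp hxy).2; linarith
  by_cases hca : |a - y| ≤ α * t
  · have : A ∈ S α f a := ⟨t, ht, y, hca, rfl⟩
    have h1 := le_ntMax hf hbv this
    exact ⟨x, hax, by have := le_max_left (ntMax α f a) |f x|; linarith⟩
  have ha' : a < y - α * t := by
    rcases lt_or_ge a (y - α * t) with h | h
    · exact h
    · exfalso; apply hca; rw [abs_le]; constructor <;> nlinarith
  obtain ⟨pl, hpl1, hpl2, hpl3, hpl4⟩ := left_piece hf hbv hα ht ha'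
  have hpr : pl ≤ y + t := by
    rcases hpl3 with h | ⟨h1a', h1b⟩
    · rw [h]; linarith
    · nlinarith
  have hAeq : A = (1 / ((y + t) - (y - t))) * ∫ s in (y - t)..(y + t), |f s| := by
    rw [hAdef, show (y + t) - (y - t) = 2 * t by ring]
  by_cases hmq : pl < y + t
  · obtain ⟨c, hc1, hc2, hc3⟩ := exists_high hf hbv hmq
      (show (1 / ((y + t) - pl)) * (∫ s in pl..(y + t), |f s|) - ε / 2 <
          (1 / ((y + t) - pl)) * ∫ s in pl..(y + t), |f s| by linarith)
    refine ⟨c, lt_of_le_of_lt hpl2 hc1, ?_⟩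
    have hKb : A ≤ max (ntMax α f a) |f c| + ε / 2 := by
      rw [hAeq]
      apply avg_le_of_pieces hf hbv hpl1 hpr (le_refl (y + t)) (by linarith)
      · intro h
        have := hpl4 h
        have h2 : ntMax α f a ≤ max (ntMax α f a) |f c| := le_max_left _ _
        linarith
      · intro h
        have h2 : |f c| ≤ max (ntMax α f a) |f c| := le_max_right _ _
        linarith
      · intro h; exact absurd h (lt_irrefl _)
    linarith
  · have hp' : pl = y + t := le_antisymm hpr (le_of_not_gt hmq)
    refine ⟨a + 1, by linarith, ?_⟩
    have hKb : A ≤ max (ntMax α f a) |f (a + 1)| + ε / 2 := by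
      rw [hAeq]
      apply avg_le_of_pieces hf hbv hpl1 hpr (le_refl (y + t)) (by linarith)
      · intro h
        have := hpl4 h
        have h2 : ntMax α f a ≤ max (ntMax α f a) |f (a + 1)| := le_max_left _ _
        linarith
      · intro h; rw [hp'] at h; exact absurd h (lt_irrefl _)
      · intro h; exact absurd h (lt_irrefl _)
    linarith

end core2

lemma chain_sum_le (hbv : eVariationOn f Set.univ ≠ ⊤) {m : ℕ} {Y : ℕ → ℝ}
    (hY : Monotone Y) :
    ∑ i ∈ Finset.range m, |(|f (Y (i + 1))|) - (|f (Y i)|)| ≤ V f := by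
  have h1 : eVariationOn (fun s => |f s|) Set.univ ≤ eVariationOn f Set.univ := by
    have he : (fun s => |f s|) = (fun z : ℝ => ‖z‖) ∘ f := by
      funext s; simp [Real.norm_eq_abs]
    rw [he]
    have h2 := (lipschitzWith_one_norm (E := ℝ)).lipschitzOnWith (s := Set.univ)
    have h3 := h2.comp_eVariationOn_le (Set.mapsTo_univ f Set.univ)
    simpa [Function.comp_def, Real.norm_eq_abs] using h3
  have h2 := eVariationOn.sum_le (f := fun s => |f s|) (n := m) hY (fun i => Set.mem_univ (Y i))
  have h3 : ENNReal.ofReal (∑ i ∈ Finset.range m, |(|f (Y (i + 1))|) - (|f (Y i)|)|)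
      ≤ eVariationOn f Set.univ := by
    rw [ENNReal.ofReal_sum_of_nonneg (fun i _ => abs_nonneg _)]
    refine le_trans (le_of_eq ?_) (le_trans h2 h1)
    refine Finset.sum_congr rfl fun i _ => ?_
    rw [edist_dist, Real.dist_eq]
  exact (ENNReal.ofReal_le_iff_le_toReal hbv).mp h3

lemma between_abs {a b c ε : ℝ} (hε : 0 ≤ ε) (h1 : b ≤ max a c + 2 * ε) (h2 : min a c - 2 * ε ≤ b) :
    |b - a| + |c - b| ≤ |c - a| + 4 * ε := by
  rcases le_total a c with h | h
  · rw [max_eq_right h] at h1; rw [min_eq_left h] at h2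
    rw [abs_of_nonneg (by linarith : (0:ℝ) ≤ c - a)]
    rcases abs_cases (b - a) with ⟨e1, _⟩ | ⟨e1, _⟩ <;>
      rcases abs_cases (c - b) with ⟨e2, _⟩ | ⟨e2, _⟩ <;> rw [e1, e2] <;> linarith
  · rw [max_eq_left h] at h1; rw [min_eq_right h] at h2
    rw [abs_of_nonpos (by linarith : c - a ≤ 0)]
    rcases abs_cases (b - a) with ⟨e1, _⟩ | ⟨e1, _⟩ <;>
      rcases abs_cases (c - b) with ⟨e2, _⟩ | ⟨e2, _⟩ <;> rw [e1, e2] <;> linarith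

lemma main (hf : Measurable f) (hbv : eVariationOn f Set.univ ≠ ⊤) (hα : 1 / 3 ≤ α)
    {ε : ℝ} (hε : 0 < ε) :
    ∀ n : ℕ, ∀ x : ℕ → ℝ, Monotone x →
      ∑ i ∈ Finset.range n, |ntMax α f (x (i + 1)) - ntMax α f (x i)| ≤ V f + 4 * ε * n := by
  intro n
  induction n using Nat.strong_induction_on with
  | _ n IH =>
  intro x hx
  classical
  set u : ℝ → ℝ := ntMax α f with hu
  set v : ℕ → ℝ := fun i => u (x i) with hv
  rcases Nat.eq_zero_or_pos n with rfl | hpos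
  · simpa using V_nonneg f
  -- Case: first increment small
  by_cases hB1 : |v 1 - v 0| ≤ 4 * ε
  · obtain ⟨m, rfl⟩ : ∃ m, n = m + 1 := ⟨n - 1, by omega⟩
    have hx' : Monotone (fun i => x (i + 1)) := fun i j h => hx (by omega)
    have hIH := IH m (by omega) (fun i => x (i + 1)) hx'
    rw [Finset.sum_range_succ']
    have hcast : ((m + 1 : ℕ) : ℝ) = (m : ℝ) + 1 := by push_cast; ring
    have hIH' : ∑ i ∈ Finset.range m, |u (x (i + 1 + 1)) - u (x (i + 1))| ≤ V f + 4 * ε * m :=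
      hIH
    rw [hcast]
    have h0 : |u (x (0 + 1)) - u (x 0)| ≤ 4 * ε := by simpa using hB1
    calc (∑ i ∈ Finset.range m, |u (x (i + 1 + 1)) - u (x (i + 1))|)
          + |u (x (0 + 1)) - u (x 0)|
        ≤ (V f + 4 * ε * m) + 4 * ε := add_le_add hIH' h0
      _ = V f + 4 * ε * ((m : ℝ) + 1) := by ring
  -- Case: last increment small
  by_cases hB2 : |v n - v (n - 1)| ≤ 4 * ε
  · obtain ⟨m, rfl⟩ : ∃ m, n = m + 1 := ⟨n - 1, by omega⟩
    have hIH := IH m (by omega) x hx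
    rw [Finset.sum_range_succ]
    have hcast : ((m + 1 : ℕ) : ℝ) = (m : ℝ) + 1 := by push_cast; ring
    rw [hcast]
    have h0 : |u (x (m + 1)) - u (x m)| ≤ 4 * ε := by
      have : m + 1 - 1 = m := rfl
      simpa [this] using hB2
    calc (∑ i ∈ Finset.range m, |u (x (i + 1)) - u (x i)|) + |u (x (m + 1)) - u (x m)|
        ≤ (V f + 4 * ε * m) + 4 * ε := add_le_add hIH h0
      _ = V f + 4 * ε * ((m : ℝ) + 1) := by ring
  -- Case: an interior point is (approximately) between its neighbours
  by_cases hA : ∃ j, j + 2 ≤ n ∧ v (j + 1) ≤ max (v j) (v (j + 2)) + 2 * ε ∧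
      min (v j) (v (j + 2)) - 2 * ε ≤ v (j + 1)
  · obtain ⟨j, hj, hA1, hA2⟩ := hA
    obtain ⟨m, rfl⟩ : ∃ m, n = m + 1 := ⟨n - 1, by omega⟩
    have hjm : j < m := by omega
    set x' : ℕ → ℝ := fun i => if i ≤ j then x i else x (i + 1) with hx'def
    set v' : ℕ → ℝ := fun i => u (x' i) with hv'def
    have hx' : Monotone x' := by
      intro i k hik
      simp only [hx'def]
      by_cases hi : i ≤ j <;> by_cases hk : k ≤ j
      · simp only [if_pos hi, if_pos hk]; exact hx hik
      · simp only [if_pos hi, if_neg hk]; exact hx (by omega)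
      · exact absurd (le_trans hik hk) hi
      · simp only [if_neg hi, if_neg hk]; exact hx (by omega)
    have hIH := IH m (by omega) x' hx'
    have hIH2 : ∑ i ∈ Finset.range m, |v' (i + 1) - v' i| ≤ V f + 4 * ε * m := hIH
    have hsum1 : ∑ i ∈ Finset.range (m + 1), |v (i + 1) - v i|
        = (∑ i ∈ Finset.range j, |v (i + 1) - v i|)
          + (|v (j + 1) - v j| + (|v (j + 1 + 1) - v (j + 1)|
            + ∑ i ∈ Finset.Ico (j + 1 + 1) (m + 1), |v (i + 1) - v i|)) := by
      rw [Finset.range_eq_Ico,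
        ← Finset.sum_Ico_consecutive (fun i => |v (i + 1) - v i|)
          (Nat.zero_le j) (by omega : j ≤ m + 1),
        Finset.sum_eq_sum_Ico_succ_bot (by omega : j < m + 1) (fun i => |v (i + 1) - v i|),
        Finset.sum_eq_sum_Ico_succ_bot (by omega : j + 1 < m + 1)
          (fun i => |v (i + 1) - v i|), ← Finset.range_eq_Ico]
    have hsum2 : ∑ i ∈ Finset.range m, |v' (i + 1) - v' i|
        = (∑ i ∈ Finset.range j, |v (i + 1) - v i|)
          + (|v' (j + 1) - v' j| + ∑ i ∈ Finset.Ico (j + 1) m, |v' (i + 1) - v' i|) := by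
      rw [Finset.range_eq_Ico,
        ← Finset.sum_Ico_consecutive (fun i => |v' (i + 1) - v' i|)
          (Nat.zero_le j) (by omega : j ≤ m),
        Finset.sum_eq_sum_Ico_succ_bot (by omega : j < m) (fun i => |v' (i + 1) - v' i|),
        ← Finset.range_eq_Ico]
      congr 1
      refine Finset.sum_congr rfl fun i hi => ?_
      have hij : i < j := Finset.mem_range.mp hi
      simp only [hv'def, hx'def, hv, if_pos (by omega : i + 1 ≤ j), if_pos (by omega : i ≤ j)]
    have hv'j : |v' (j + 1) - v' j| = |v (j + 1 + 1) - v j| := by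
      simp only [hv'def, hx'def, hv, if_pos (le_refl j), if_neg (by omega : ¬ j + 1 ≤ j)]
    have htail : ∑ i ∈ Finset.Ico (j + 1) m, |v' (i + 1) - v' i|
        = ∑ i ∈ Finset.Ico (j + 1 + 1) (m + 1), |v (i + 1) - v i| := by
      rw [Finset.sum_Ico_eq_sum_range, Finset.sum_Ico_eq_sum_range]
      rw [show m + 1 - (j + 1 + 1) = m - (j + 1) from by omega]
      refine Finset.sum_congr rfl fun k _ => ?_
      simp only [hv'def, hx'def, if_neg (by omega : ¬ j + 1 + k ≤ j),
        if_neg (by omega : ¬ j + 1 + k + 1 ≤ j)]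
      rw [show j + 1 + 1 + k + 1 = j + 1 + k + 1 + 1 from by omega,
        show j + 1 + 1 + k = j + 1 + k + 1 from by omega]
    rw [show j + 2 = j + 1 + 1 from rfl] at hA1 hA2
    have hbetw : |v (j + 1) - v j| + |v (j + 1 + 1) - v (j + 1)|
        ≤ |v (j + 1 + 1) - v j| + 4 * ε := between_abs hε.le hA1 hA2
    have hcast : ((m + 1 : ℕ) : ℝ) = (m : ℝ) + 1 := by push_cast; ring
    rw [hsum2, hv'j, htail] at hIH2
    rw [hcast, hsum1]
    linarith
  -- Main case: strictly alternating with margins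
  push_neg at hB1 hB2
  have hmargin : ∀ j, j + 2 ≤ n →
      max (v j) (v (j + 2)) + 2 * ε < v (j + 1) ∨
      v (j + 1) < min (v j) (v (j + 2)) - 2 * ε := by
    intro j hj
    by_contra hcon
    push_neg at hcon
    exact hA ⟨j, hj, hcon.1, hcon.2⟩
  have gaps : ∀ i, i + 1 ≤ n → 2 * ε < |v (i + 1) - v i| := by
    intro i hi
    rcases Nat.eq_zero_or_pos i with rfl | hipos
    · linarith
    · rcases eq_or_lt_of_le hi with he | hlt
      · obtain rfl : n = i + 1 := he.symm
        have : i + 1 - 1 = i := rfl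
        rw [this] at hB2
        linarith
      · obtain ⟨j, rfl⟩ : ∃ j, i = j + 1 := ⟨i - 1, by omega⟩
        rcases hmargin j (by omega) with hm | hm
        · have h2 : v (j + 2) ≤ max (v j) (v (j + 2)) := le_max_right _ _
          have h3 : v (j + 1 + 1) - v (j + 1) ≤ |v (j + 1 + 1) - v (j + 1)| := le_abs_self _
          have h4 : -(v (j + 1 + 1) - v (j + 1)) ≤ |v (j + 1 + 1) - v (j + 1)| := neg_le_abs _
          have : j + 1 + 1 = j + 2 := rfl
          rw [this] at h3 h4 ⊢
          linarith
        · have h2 : min (v j) (v (j + 2)) ≤ v (j + 2) := min_le_right _ _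
          have h3 : v (j + 2) - v (j + 1) ≤ |v (j + 2) - v (j + 1)| := le_abs_self _
          have : j + 1 + 1 = j + 2 := rfl
          rw [this]
          linarith
  have hxs : ∀ i, i + 1 ≤ n → x i < x (i + 1) := by
    intro i hi
    rcases lt_or_eq_of_le (hx (Nat.le_succ i)) with h | h
    · exact h
    · exfalso
      have hg := gaps i hi
      have : v (i + 1) = v i := by rw [hv]; simp only [← h]
      rw [this] at hg
      simp at hg
      linarith
  -- peak predicate
  set pk : ℕ → Prop := fun i => (i < n ∧ v (i + 1) < v i) ∨ (n ≤ i ∧ v (n - 1) < v n)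
    with hpk
  have vne : ∀ i, i + 1 ≤ n → v (i + 1) ≠ v i := by
    intro i hi h
    have hg := gaps i hi
    rw [h] at hg; simp at hg; linarith
  have pk_lt : ∀ {i}, i < n → (pk i ↔ v (i + 1) < v i) := by
    intro i h
    constructor
    · rintro (⟨_, h2⟩ | ⟨h2, _⟩)
      · exact h2
      · omega
    · intro h2; exact Or.inl ⟨h, h2⟩
  have pk_n : pk n ↔ v (n - 1) < v n := by
    constructor
    · rintro (⟨h2, _⟩ | ⟨_, h2⟩)
      · omega
      · exact h2
    · intro h2; exact Or.inr ⟨le_refl n, h2⟩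
  have pk_succ : ∀ i, i + 1 ≤ n → (pk i ↔ ¬ pk (i + 1)) := by
    intro i hi
    rcases eq_or_lt_of_le hi with he | hlt
    · have hin : i < n := by omega
      rw [pk_lt hin]
      have h2 : pk (i + 1) ↔ v (n - 1) < v n := by rw [he]; exact pk_n
      rw [h2]
      have e1 : n - 1 = i := by omega
      have e2 : n = i + 1 := by omega
      rw [e1, e2]
      have := vne i hi
      constructor
      · intro h3 h4; linarith
      · intro h3
        rcases lt_or_ge (v (i + 1)) (v i) with h5 | h5
        · exact h5
        · exact absurd (lt_of_le_of_ne h5 (Ne.symm this)) h3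
    · rw [pk_lt (by omega : i < n), pk_lt (by omega : i + 1 < n)]
      rcases hmargin i (by omega) with hm | hm
      · have h2 : v i ≤ max (v i) (v (i + 2)) := le_max_left _ _
        have h3 : v (i + 2) ≤ max (v i) (v (i + 2)) := le_max_right _ _
        have e : i + 1 + 1 = i + 2 := rfl
        rw [e]
        constructor
        · intro h4; linarith
        · intro h4; linarith
      · have h2 : min (v i) (v (i + 2)) ≤ v i := min_le_left _ _
        have h3 : min (v i) (v (i + 2)) ≤ v (i + 2) := min_le_right _ _
        have e : i + 1 + 1 = i + 2 := rfl
        rw [e]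
        constructor
        · intro h4; linarith
        · intro h4; linarith
  -- choose peak witnesses
  have hpeak : ∀ i, i ≤ n → pk i → ∃ ci : ℝ,
      (0 < i → x (i - 1) < ci) ∧ (i < n → ci < x (i + 1)) ∧ v i ≤ |f ci| + ε := by
    intro i hin hpki
    rcases Nat.eq_zero_or_pos i with rfl | hipos
    · have h01 : x 0 < x 1 := hxs 0 hpos
      obtain ⟨c, hcb, hcle⟩ := starL hf hbv hα h01 hε
      refine ⟨c, fun h => absurd h (lt_irrefl 0), fun _ => hcb, ?_⟩
      have hd : v 1 < v 0 := (pk_lt hpos).mp hpki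
      have hg := gaps 0 hpos
      have habs : |v (0 + 1) - v 0| = v 0 - v 1 := by
        rw [abs_sub_comm]; rw [abs_of_nonneg (by simpa using hd.le : (0:ℝ) ≤ v 0 - v (0+1))]
      rw [habs] at hg
      rcases max_cases (ntMax α f (x 1)) |f c| with ⟨hmx, _⟩ | ⟨hmx, _⟩
      · exfalso
        rw [hmx] at hcle
        have : v 0 ≤ v 1 + ε := hcle
        linarith
      · rw [hmx] at hcle; exact hcle
    · rcases eq_or_lt_of_le hin with rfl | hlt
      · have hn1 : x (i - 1) < x i := by
          have := hxs (i - 1) (by omega)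
          have e : i - 1 + 1 = i := by omega
          rwa [e] at this
        obtain ⟨c, hac, hcle⟩ := starR hf hbv hα hn1 hε
        refine ⟨c, fun _ => hac, fun h => absurd h (lt_irrefl i), ?_⟩
        have hd : v (i - 1) < v i := pk_n.mp hpki
        have hg := gaps (i - 1) (by omega)
        have e : i - 1 + 1 = i := by omega
        rw [e] at hg
        have habs : |v i - v (i - 1)| = v i - v (i - 1) := abs_of_nonneg (by linarith)
        rw [habs] at hg
        rcases max_cases (ntMax α f (x (i - 1))) |f c| with ⟨hmx, _⟩ | ⟨hmx, _⟩
        · exfalso; rw [hmx] at hcle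
          have : v i ≤ v (i - 1) + ε := hcle
          linarith
        · rw [hmx] at hcle; exact hcle
      · have hn1 : x (i - 1) < x i := by
          have := hxs (i - 1) (by omega)
          have e : i - 1 + 1 = i := by omega
          rwa [e] at this
        have hn2 : x i < x (i + 1) := hxs i (by omega)
        obtain ⟨c, hac, hcb, hcle⟩ := star hf hbv hα hn1 hn2 hε
        refine ⟨c, fun _ => hac, fun _ => hcb, ?_⟩
        have hd : v (i + 1) < v i := (pk_lt hlt).mp hpki
        have hg1 := gaps i (by omega)
        have habs1 : |v (i + 1) - v i| = v i - v (i + 1) := by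
          rw [abs_sub_comm]; exact abs_of_nonneg (by linarith)
        rw [habs1] at hg1
        -- other neighbour: pk (i-1) is false
        have hnp : ¬ pk (i - 1) := by
          intro hp
          have := (pk_succ (i - 1) (by omega)).mp hp
          have e : i - 1 + 1 = i := by omega
          rw [e] at this
          exact this hpki
        have hd2 : v (i - 1) < v i := by
          rcases lt_or_ge (v (i - 1 + 1)) (v (i - 1)) with h5 | h5
          · exact absurd ((pk_lt (by omega : i - 1 < n)).mpr h5) hnp
          · have e : i - 1 + 1 = i := by omega
            rw [e] at h5
            rcases eq_or_lt_of_le h5 with h6 | h6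
            · exfalso
              have := vne (i - 1) (by omega)
              rw [e] at this
              exact this h6.symm
            · exact h6
        have hg2 := gaps (i - 1) (by omega)
        have e : i - 1 + 1 = i := by omega
        rw [e] at hg2
        have habs2 : |v i - v (i - 1)| = v i - v (i - 1) := abs_of_nonneg (by linarith)
        rw [habs2] at hg2
        rcases max_cases (max (ntMax α f (x (i - 1))) (ntMax α f (x (i + 1)))) |f c|
          with ⟨hmx, _⟩ | ⟨hmx, _⟩
        · exfalso
          rw [hmx] at hcle
          rcases max_cases (ntMax α f (x (i - 1))) (ntMax α f (x (i + 1)))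
            with ⟨hmx2, _⟩ | ⟨hmx2, _⟩
          · rw [hmx2] at hcle
            have : v i ≤ v (i - 1) + ε := hcle
            linarith
          · rw [hmx2] at hcle
            have : v i ≤ v (i + 1) + ε := hcle
            linarith
        · rw [hmx] at hcle; exact hcle
  have hcex : ∀ i : ℕ, ∃ ci : ℝ, i ≤ n → pk i →
      ((0 < i → x (i - 1) < ci) ∧ (i < n → ci < x (i + 1)) ∧ v i ≤ |f ci| + ε) := by
    intro i
    by_cases h : i ≤ n ∧ pk i
    · obtain ⟨ci, h1, h2, h3⟩ := hpeak i h.1 h.2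
      exact ⟨ci, fun _ _ => ⟨h1, h2, h3⟩⟩
    · exact ⟨0, fun hin hpki => absurd ⟨hin, hpki⟩ h⟩
  choose c hcprop using hcex
  -- choose pit witnesses
  have hpitex : ∀ i : ℕ, ∃ ξ : ℝ, i ≤ n → ¬ pk i →
      ((0 < i → c (i - 1) < ξ) ∧ (i < n → ξ < c (i + 1)) ∧ |f ξ| ≤ v i + ε) := by
    intro i
    by_cases h : i ≤ n ∧ ¬ pk i
    on_goal 2 => exact ⟨0, fun hin hpki => absurd ⟨hin, hpki⟩ h⟩
    obtain ⟨hin, hnpk⟩ := h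
    set lo := if 0 < i then c (i - 1) else x 0 - 1 with hlodef
    set hi' := if i < n then c (i + 1) else x n + 1 with hhidef
    have hlox : lo < x i := by
      by_cases h0 : 0 < i
      · rw [hlodef, if_pos h0]
        have hpkim : pk (i - 1) := by
          have := pk_succ (i - 1) (by omega)
          have e : i - 1 + 1 = i := by omega
          rw [e] at this
          exact this.mpr hnpk
        have := (hcprop (i - 1) (by omega) hpkim).2.1 (by omega)
        have e : i - 1 + 1 = i := by omega
        rwa [e] at this
      · rw [hlodef, if_neg h0]
        have : i = 0 := by omega
        rw [this]; linarith
    have hhix : x i < hi' := by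
      by_cases h0 : i < n
      · rw [hhidef, if_pos h0]
        have hpkip : pk (i + 1) := by
          by_contra hnp2
          exact hnpk ((pk_succ i (by omega)).mpr hnp2)
        have := (hcprop (i + 1) (by omega) hpkip).1 (by omega)
        simpa using this
      · rw [hhidef, if_neg h0]
        have : i = n := by omega
        rw [this]; linarith
    obtain ⟨ξ, h1, h2, h3⟩ := exists_low hf hbv hα (x i) lo hi' hlox hhix hε
    refine ⟨ξ, fun _ _ => ⟨?_, ?_, h3⟩⟩
    · intro h0; rw [hlodef, if_pos h0] at h1; exact h1
    · intro h0; rw [hhidef, if_pos h0] at h2; exact h2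
  choose ξp hξprop using hpitex
  set y : ℕ → ℝ := fun i => if pk i then c i else ξp i with hy
  have ystep : ∀ i, i + 1 ≤ n → y i < y (i + 1) := by
    intro i hi
    by_cases hpki : pk i
    · have hnp : ¬ pk (i + 1) := (pk_succ i hi).mp hpki
      rw [hy]
      simp only [if_pos hpki, if_neg hnp]
      have := (hξprop (i + 1) (by omega) hnp).1 (by omega)
      simpa using this
    · have hp : pk (i + 1) := by
        by_contra hnp2
        exact hpki ((pk_succ i hi).mpr hnp2)
      rw [hy]
      simp only [if_neg hpki, if_pos hp]
      exact (hξprop i (by omega) hpki).2.1 (by omega)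
  have ymon : ∀ d a, a + d ≤ n → y a ≤ y (a + d) := by
    intro d
    induction d with
    | zero => intro a _; simp
    | succ d ih =>
      intro a h
      have h1 := ih a (by omega)
      have h2 := ystep (a + d) (by omega)
      have e : a + (d + 1) = a + d + 1 := by omega
      rw [e]
      linarith
  set Y : ℕ → ℝ := fun i => y (min i n) with hY
  have hYmon : Monotone Y := by
    intro i j hij
    rw [hY]
    simp only
    have h1 : min i n ≤ min j n := by omega
    have := ymon (min j n - min i n) (min i n) (by omega)
    have e : min i n + (min j n - min i n) = min j n := by omega
    rw [e] at this
    exact this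
  have hterm : ∀ i, i + 1 ≤ n →
      |v (i + 1) - v i| ≤ |(|f (Y (i + 1))|) - (|f (Y i)|)| + 2 * ε := by
    intro i hi
    have hYi : Y i = y i := by rw [hY]; simp only; rw [min_eq_left (by omega)]
    have hYi1 : Y (i + 1) = y (i + 1) := by rw [hY]; simp only; rw [min_eq_left (by omega)]
    rw [hYi, hYi1]
    by_cases hpki : pk i
    · have hnp : ¬ pk (i + 1) := (pk_succ i hi).mp hpki
      have hyi : y i = c i := by rw [hy]; simp only [if_pos hpki]
      have hyi1 : y (i + 1) = ξp (i + 1) := by rw [hy]; simp only [if_neg hnp]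
      have hb1 : v i ≤ |f (c i)| + ε := (hcprop i (by omega) hpki).2.2
      have hb2 : |f (ξp (i + 1))| ≤ v (i + 1) + ε := (hξprop (i + 1) (by omega) hnp).2.2
      have hd : v (i + 1) < v i := (pk_lt (by omega)).mp hpki
      have habs : |v (i + 1) - v i| = v i - v (i + 1) := by
        rw [abs_sub_comm]; exact abs_of_nonneg (by linarith)
      rw [habs, hyi, hyi1]
      have h5 : |f (c i)| - |f (ξp (i + 1))| ≤ |(|f (ξp (i + 1))|) - (|f (c i)|)| := by
        rw [abs_sub_comm]; exact le_abs_self _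
      linarith
    · have hp : pk (i + 1) := by
        by_contra hnp2
        exact hpki ((pk_succ i hi).mpr hnp2)
      have hyi : y i = ξp i := by rw [hy]; simp only [if_neg hpki]
      have hyi1 : y (i + 1) = c (i + 1) := by rw [hy]; simp only [if_pos hp]
      have hb1 : |f (ξp i)| ≤ v i + ε := (hξprop i (by omega) hpki).2.2
      have hb2 : v (i + 1) ≤ |f (c (i + 1))| + ε := (hcprop (i + 1) (by omega) hp).2.2
      have hd : v i < v (i + 1) := by
        rcases lt_or_ge (v (i + 1)) (v i) with h5 | h5
        · exact absurd ((pk_lt (by omega)).mpr h5) hpki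
        · rcases eq_or_lt_of_le h5 with h6 | h6
          · exact absurd h6.symm (vne i hi)
          · exact h6
      have habs : |v (i + 1) - v i| = v (i + 1) - v i := abs_of_nonneg (by linarith)
      rw [habs, hyi, hyi1]
      have h5 : |f (c (i + 1))| - |f (ξp i)| ≤ |(|f (c (i + 1))|) - (|f (ξp i)|)| :=
        le_abs_self _
      linarith
  have hsum : ∑ i ∈ Finset.range n, |v (i + 1) - v i|
      ≤ ∑ i ∈ Finset.range n, (|(|f (Y (i + 1))|) - (|f (Y i)|)| + 2 * ε) := by
    refine Finset.sum_le_sum fun i hi => ?_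
    exact hterm i (Finset.mem_range.mp hi)
  have hsum2 : ∑ i ∈ Finset.range n, (|(|f (Y (i + 1))|) - (|f (Y i)|)| + 2 * ε)
      = (∑ i ∈ Finset.range n, |(|f (Y (i + 1))|) - (|f (Y i)|)|) + 2 * ε * n := by
    rw [Finset.sum_add_distrib, Finset.sum_const, Finset.card_range, nsmul_eq_mul]
    ring
  have hchain := chain_sum_le hbv (m := n) hYmon
  have hn0 : (0:ℝ) ≤ (n:ℝ) := Nat.cast_nonneg n
  calc ∑ i ∈ Finset.range n, |v (i + 1) - v i|
      ≤ (∑ i ∈ Finset.range n, |(|f (Y (i + 1))|) - (|f (Y i)|)|) + 2 * ε * n := by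
        rw [← hsum2]; exact hsum
    _ ≤ V f + 2 * ε * n := by linarith
    _ ≤ V f + 4 * ε * n := by nlinarith

end NtHL

/-- If `f : ℝ → ℝ` is measurable and of bounded variation, then for every `α ≥ 1/3`,
`Var(M^α f) ≤ Var(f)`. -/
theorem var_ntMax_le_var (f : ℝ → ℝ) (hf : Measurable f)
    (hbv : eVariationOn f Set.univ ≠ ⊤) (α : ℝ) (hα : 1 / 3 ≤ α) :
    eVariationOn (ntMax α f) Set.univ ≤ eVariationOn f Set.univ := by
  have key : ∀ (n : ℕ) (p : ℕ → ℝ), Monotone p →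
      ∑ i ∈ Finset.range n, |ntMax α f (p (i + 1)) - ntMax α f (p i)| ≤ NtHL.V f := by
    intro n p hp
    refine le_of_forall_pos_le_add fun ε hε => ?_
    have hε' : 0 < ε / (4 * (n + 1)) := by positivity
    have h := NtHL.main hf hbv hα hε' n p hp
    have hb : 4 * (ε / (4 * (n + 1))) * n ≤ ε := by
      have hn : (0:ℝ) ≤ (n:ℝ) := Nat.cast_nonneg n
      have h4 : (0:ℝ) < 4 * ((n:ℝ) + 1) := by positivity
      have he : 4 * (ε / (4 * ((n:ℝ) + 1))) * (n:ℝ) = ε * ((4 * n) / (4 * (n + 1))) := by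
        field_simp
      rw [he]
      have hle : (4 * (n:ℝ)) / (4 * (n + 1)) ≤ 1 := by
        rw [div_le_one h4]; linarith
      nlinarith
    linarith
  have hlhs : eVariationOn (ntMax α f) Set.univ =
      ⨆ p : ℕ × { u : ℕ → ℝ // Monotone u ∧ ∀ i, u i ∈ Set.univ },
        ∑ i ∈ Finset.range p.1, edist (ntMax α f (p.2.1 (i + 1))) (ntMax α f (p.2.1 i)) := rfl
  rw [hlhs]
  refine iSup_le ?_
  rintro ⟨n, p, hp, -⟩
  calc ∑ i ∈ Finset.range n, edist (ntMax α f (p (i + 1))) (ntMax α f (p i))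
      = ENNReal.ofReal (∑ i ∈ Finset.range n, |ntMax α f (p (i + 1)) - ntMax α f (p i)|) := by
        rw [ENNReal.ofReal_sum_of_nonneg (fun i _ => abs_nonneg _)]
        refine Finset.sum_congr rfl fun i _ => ?_
        rw [edist_dist, Real.dist_eq]
    _ ≤ ENNReal.ofReal (NtHL.V f) := ENNReal.ofReal_le_ofReal (key n p hp)
    _ = eVariationOn f Set.univ := by rw [NtHL.V, ENNReal.ofReal_toReal hbv]
end

section
/- Let f : ℝ → ℝ be nonnegative, measurable and locally integrable, let α > 0, and write g = M^α f. Let x_1 < x_2 < … < x_N be real numbers such that g is not monotone on {x_1, …, x_N}, let k be the smallest index with g(x_k) < g(x_{k+1}), and let j be the largest index with g(x_j) < g(x_{j−1}). If k < j, then there exists a system of peaks 𝔓 for g whose points all belong to {x_k, …, x_j} such that Σ_{i=1}^{N−1} |g(x_{i+1}) − g(x_i)| ≤ (g(x_1) − g(x_k)) + Var_𝔓(g) + (g(x_N) − g(x_j)). If k ≥ j, then Σ_{i=1}^{N−1} |g(x_{i+1}) − g(x_i)| ≤ (g(x_1) − g(x_j)) + (g(x_N) − g(x_k)). -/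
open MeasureTheory

/-- `p 0 < r 0 < p 1 = q 0 < r 1 < … < r (n-1) < p n` is a system of `n` peaks for `g`:
each triple `p i < r i < p (i+1)` is a peak, i.e. `g (p i) < g (r i) > g (p (i+1))`. -/
def IsPeakSystem {X : Type*} [LinearOrder X] (g : X → ℝ) (n : ℕ) (p r : ℕ → X) : Prop :=
  0 < n ∧ ∀ i < n, p i < r i ∧ r i < p (i + 1) ∧ g (p i) < g (r i) ∧ g (p (i + 1)) < g (r i)

/-- The variation of `g` over the system of peaks `p, r`: the sum over the peaks
of `2 g(r_i) − g(p_i) − g(q_i)`. -/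
def peakVar {X : Type*} (g : X → ℝ) (n : ℕ) (p r : ℕ → X) : ℝ :=
  ∑ i ∈ Finset.range n, (2 * g (r i) - g (p i) - g (p (i + 1)))

private lemma ntm_tele_inc (h : ℕ → ℝ) (a : ℕ) :
    ∀ b, a ≤ b → (∀ i, a ≤ i → i < b → h i ≤ h (i + 1)) →
      ∑ i ∈ Finset.Ico a b, |h (i + 1) - h i| = h b - h a := by
  refine Nat.le_induction ?_ ?_
  · intro _; simp
  · intro b hab ih hm
    rw [Finset.sum_Ico_succ_top hab, ih (fun i hi hib => hm i hi (by omega)),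
      abs_of_nonneg (sub_nonneg.mpr (hm b hab (by omega)))]
    ring

private lemma ntm_tele_dec (h : ℕ → ℝ) (a : ℕ) :
    ∀ b, a ≤ b → (∀ i, a ≤ i → i < b → h (i + 1) ≤ h i) →
      ∑ i ∈ Finset.Ico a b, |h (i + 1) - h i| = h a - h b := by
  refine Nat.le_induction ?_ ?_
  · intro _; simp
  · intro b hab ih hm
    rw [Finset.sum_Ico_succ_top hab, ih (fun i hi hib => hm i hi (by omega)),
      abs_of_nonpos (sub_nonpos.mpr (hm b hab (by omega)))]
    ring

private lemma ntm_key (h : ℕ → ℝ) : ∀ d k j : ℕ, j - k ≤ d → k < j →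
    h k < h (k + 1) → h j < h (j - 1) →
    ∃ n : ℕ, ∃ P R : ℕ → ℕ, 0 < n ∧ P 0 = k ∧
      (∀ i ≤ n, k ≤ P i ∧ P i ≤ j) ∧ (∀ i < n, k ≤ R i ∧ R i ≤ j) ∧
      (∀ i < n, P i < R i ∧ R i < P (i + 1) ∧ h (P i) < h (R i) ∧ h (P (i + 1)) < h (R i)) ∧
      ∑ i ∈ Finset.Ico k j, |h (i + 1) - h i| ≤
        ∑ i ∈ Finset.range n, (2 * h (R i) - h (P i) - h (P (i + 1))) := by
  intro d
  induction d with
  | zero => intro k j h1 h2 _ _; omega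
  | succ d ih =>
    intro k j hd hkj hk1 hj1
    classical
    have hj2 : k + 2 ≤ j := by
      by_contra hc
      have hje : j = k + 1 := by omega
      subst hje
      simp at hj1
      linarith
    -- first descent after k
    have hQ : ∃ m, k + 1 ≤ m ∧ h (m + 1) < h m := by
      refine ⟨j - 1, by omega, ?_⟩
      have hj1' : j - 1 + 1 = j := by omega
      rw [hj1']; exact hj1
    set m := Nat.find hQ with hm_def
    obtain ⟨hm1, hm2⟩ := Nat.find_spec hQ
    have hmle : m ≤ j - 1 := by
      apply Nat.find_min' hQ
      refine ⟨by omega, ?_⟩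
      have hj1' : j - 1 + 1 = j := by omega
      rw [hj1']; exact hj1
    have hinc : ∀ i, k ≤ i → i < m → h i ≤ h (i + 1) := by
      intro i hi him
      rcases eq_or_lt_of_le hi with hik | hik
      · subst hik; exact le_of_lt hk1
      · have := Nat.find_min hQ him
        push_neg at this
        exact this (by omega)
    have sum1 : ∑ i ∈ Finset.Ico k m, |h (i + 1) - h i| = h m - h k :=
      ntm_tele_inc h k m (by omega) hinc
    have hkm : h k < h m := by
      have h2 : h (k+1) ≤ h m := by
        have := ntm_tele_inc h (k+1) m (by omega) (fun i hi him => hinc i (by omega) him)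
        have hnn : (0:ℝ) ≤ ∑ i ∈ Finset.Ico (k+1) m, |h (i + 1) - h i| :=
          Finset.sum_nonneg (fun i _ => abs_nonneg _)
        linarith
      linarith
    by_cases hE : ∃ m', m ≤ m' ∧ m' < j ∧ h m' < h (m' + 1)
    · -- there is an ascent after m: recurse
      set m' := Nat.find hE with hm'_def
      obtain ⟨hm'1, hm'2, hm'3⟩ := Nat.find_spec hE
      have hmm' : m < m' := by
        rcases eq_or_lt_of_le hm'1 with he | he
        · exfalso; rw [← he] at hm'3; linarith
        · exact he
      have hdec2 : ∀ i, m ≤ i → i < m' → h (i + 1) ≤ h i := by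
        intro i hi him'
        have := Nat.find_min hE him'
        push_neg at this
        exact this hi (by omega)
      have sum2 : ∑ i ∈ Finset.Ico m m', |h (i + 1) - h i| = h m - h m' :=
        ntm_tele_dec h m m' (by omega) hdec2
      have hm'm : h m' < h m := by
        have h2 : h m' ≤ h (m+1) := by
          have := ntm_tele_dec h (m+1) m' (by omega) (fun i hi him => hdec2 i (by omega) him)
          have hnn : (0:ℝ) ≤ ∑ i ∈ Finset.Ico (m+1) m', |h (i + 1) - h i| :=
            Finset.sum_nonneg (fun i _ => abs_nonneg _)
          linarith
        linarith
      obtain ⟨n, P, R, hn, hP0, hPb, hRb, hpk, hsum⟩ :=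
        ih m' j (by omega) hm'2 hm'3 hj1
      refine ⟨n + 1, fun i => Nat.casesOn i k P, fun i => Nat.casesOn i m R,
        by omega, rfl, ?_, ?_, ?_, ?_⟩
      · intro i hi
        match i with
        | 0 => exact ⟨le_refl k, le_of_lt hkj⟩
        | Nat.succ i' =>
          show k ≤ P i' ∧ P i' ≤ j
          have := hPb i' (by omega)
          exact ⟨by omega, this.2⟩
      · intro i hi
        match i with
        | 0 =>
          show k ≤ m ∧ m ≤ j
          omega
        | Nat.succ i' =>
          show k ≤ R i' ∧ R i' ≤ j
          have := hRb i' (by omega)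
          exact ⟨by omega, this.2⟩
      · intro i hi
        match i with
        | 0 =>
          refine ⟨show k < m by omega, ?_, hkm, ?_⟩
          · show m < P 0
            rw [hP0]; exact hmm'
          · show h (P 0) < h m
            rw [hP0]; exact hm'm
        | Nat.succ i' =>
          exact hpk i' (by omega)
      · have splitA : ∑ i ∈ Finset.Ico k m', |h (i + 1) - h i|
            = (h m - h k) + (h m - h m') := by
          rw [← Finset.sum_Ico_consecutive _ (by omega : k ≤ m) (by omega : m ≤ m'),
            sum1, sum2]
        have splitB : ∑ i ∈ Finset.Ico k j, |h (i + 1) - h i|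
            = ((h m - h k) + (h m - h m')) + ∑ i ∈ Finset.Ico m' j, |h (i + 1) - h i| := by
          rw [← Finset.sum_Ico_consecutive _ (by omega : k ≤ m') (by omega : m' ≤ j), splitA]
        rw [splitB, Finset.sum_range_succ']
        have e0 : (2 * h ((fun i => Nat.casesOn i m R : ℕ → ℕ) 0)
            - h ((fun i => Nat.casesOn i k P : ℕ → ℕ) 0)
            - h ((fun i => Nat.casesOn i k P : ℕ → ℕ) (0 + 1))) = 2 * h m - h k - h m' := by
          show 2 * h m - h k - h (P 0) = 2 * h m - h k - h m'
          rw [hP0]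
        rw [e0]
        have eshift : ∑ i ∈ Finset.range n,
            (2 * h ((fun i => Nat.casesOn i m R : ℕ → ℕ) (i + 1))
              - h ((fun i => Nat.casesOn i k P : ℕ → ℕ) (i + 1))
              - h ((fun i => Nat.casesOn i k P : ℕ → ℕ) (i + 1 + 1)))
            = ∑ i ∈ Finset.range n, (2 * h (R i) - h (P i) - h (P (i + 1))) := rfl
        rw [eshift]
        linarith
    · -- no ascent after m: single peak (k, m, j)
      push_neg at hE
      have hdec : ∀ i, m ≤ i → i < j → h (i + 1) ≤ h i := by
        intro i hi hij
        exact hE i hi hij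
      have sum2 : ∑ i ∈ Finset.Ico m j, |h (i + 1) - h i| = h m - h j :=
        ntm_tele_dec h m j (by omega) hdec
      have hjm : h j < h m := by
        have h2 : h j ≤ h (m+1) := by
          have := ntm_tele_dec h (m+1) j (by omega) (fun i hi him => hdec i (by omega) him)
          have hnn : (0:ℝ) ≤ ∑ i ∈ Finset.Ico (m+1) j, |h (i + 1) - h i| :=
            Finset.sum_nonneg (fun i _ => abs_nonneg _)
          linarith
        linarith
      refine ⟨1, fun i => Nat.casesOn i k (fun _ => j), fun _ => m, one_pos, rfl, ?_, ?_, ?_, ?_⟩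
      · intro i _
        match i with
        | 0 => exact ⟨le_refl k, le_of_lt hkj⟩
        | Nat.succ i' =>
          show k ≤ j ∧ j ≤ j
          omega
      · intro i _
        show k ≤ m ∧ m ≤ j
        omega
      · intro i hi
        have h0 : i = 0 := by omega
        subst h0
        refine ⟨show k < m by omega, show m < j by omega, hkm, hjm⟩
      · rw [← Finset.sum_Ico_consecutive _ (by omega : k ≤ m) (by omega : m ≤ j), sum1, sum2,
          Finset.sum_range_one]
        show h m - h k + (h m - h j) ≤ 2 * h m - h k - h j
        linarith

/-- Decomposition of the variation of `g = M^α f` on a finite set `x_1 < … < x_N` into a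
monotone beginning, a system of peaks, and a monotone end. -/
theorem ntMax_divide_int (f : ℝ → ℝ) (hf0 : ∀ x, 0 ≤ f x) (hm : Measurable f)
    (hloc : LocallyIntegrable f volume) (α : ℝ) (hα : 0 < α)
    (g : ℝ → ℝ) (hg : g = ntMax α f)
    (N : ℕ) (x : ℕ → ℝ) (hx : ∀ i, 1 ≤ i → i < N → x i < x (i + 1))
    (hnotmono : ¬ MonotoneOn (fun i => g (x i)) (Set.Icc 1 N) ∧
      ¬ AntitoneOn (fun i => g (x i)) (Set.Icc 1 N))
    (k : ℕ) (hk : 1 ≤ k ∧ k < N) (hk2 : g (x k) < g (x (k + 1)))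
    (hkmin : ∀ i, 1 ≤ i → i < k → ¬ g (x i) < g (x (i + 1)))
    (j : ℕ) (hj : 1 < j ∧ j ≤ N) (hj2 : g (x j) < g (x (j - 1)))
    (hjmax : ∀ i, j < i → i ≤ N → ¬ g (x i) < g (x (i - 1))) :
    (k < j →
      ∃ n : ℕ, ∃ p r : ℕ → ℝ, IsPeakSystem g n p r ∧
        (∀ i ≤ n, ∃ m, k ≤ m ∧ m ≤ j ∧ p i = x m) ∧
        (∀ i < n, ∃ m, k ≤ m ∧ m ≤ j ∧ r i = x m) ∧
        ∑ i ∈ Finset.Ico 1 N, |g (x (i + 1)) - g (x i)| ≤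
          (g (x 1) - g (x k)) + peakVar g n p r + (g (x N) - g (x j))) ∧
    (j ≤ k →
      ∑ i ∈ Finset.Ico 1 N, |g (x (i + 1)) - g (x i)| ≤
        (g (x 1) - g (x j)) + (g (x N) - g (x k))) := by
  obtain ⟨hk1, hkN⟩ := hk
  obtain ⟨hj1, hjN⟩ := hj
  set h : ℕ → ℝ := fun i => g (x i) with hh
  have hdecL : ∀ i, 1 ≤ i → i < k → h (i + 1) ≤ h i :=
    fun i h1 h2 => le_of_not_gt (hkmin i h1 h2)
  have hincR : ∀ i, j ≤ i → i < N → h i ≤ h (i + 1) := by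
    intro i hi hiN
    have := hjmax (i + 1) (by omega) (by omega)
    rw [Nat.add_sub_cancel] at this
    exact le_of_not_gt this
  constructor
  · -- Case k < j
    intro hkj
    obtain ⟨n, P, R, hn, hP0, hPb, hRb, hpk, hsum⟩ :=
      ntm_key h (j - k) k j (le_refl _) hkj hk2 hj2
    have xlt : ∀ a b : ℕ, 1 ≤ a → a < b → b ≤ N → x a < x b := by
      intro a b h1 hab hbN
      clear hsum hpk hRb hPb hP0 hn
      induction b with
      | zero => omega
      | succ b ihb =>
        rcases eq_or_lt_of_le (by omega : a + 1 ≤ b + 1) with he | he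
        · have : a = b := by omega
          subst this
          exact hx a h1 (by omega)
        · exact lt_trans (ihb (by omega) (by omega)) (hx b (by omega) (by omega))
    refine ⟨n, fun i => x (P i), fun i => x (R i), ⟨hn, ?_⟩, ?_, ?_, ?_⟩
    · intro i hi
      obtain ⟨hPl, hPu⟩ := hPb i (le_of_lt hi)
      obtain ⟨hRl, hRu⟩ := hRb i hi
      obtain ⟨hPl', hPu'⟩ := hPb (i + 1) hi
      obtain ⟨o1, o2, o3, o4⟩ := hpk i hi
      exact ⟨xlt _ _ (by omega) o1 (by omega), xlt _ _ (by omega) o2 (by omega), o3, o4⟩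
    · intro i hi
      exact ⟨P i, (hPb i hi).1, (hPb i hi).2, rfl⟩
    · intro i hi
      exact ⟨R i, (hRb i hi).1, (hRb i hi).2, rfl⟩
    · have e1 : ∑ i ∈ Finset.Ico 1 k, |h (i + 1) - h i| = h 1 - h k :=
        ntm_tele_dec h 1 k hk1 hdecL
      have e3 : ∑ i ∈ Finset.Ico j N, |h (i + 1) - h i| = h N - h j :=
        ntm_tele_inc h j N hjN hincR
      have split1 : ∑ i ∈ Finset.Ico 1 N, |h (i + 1) - h i|
          = ∑ i ∈ Finset.Ico 1 k, |h (i + 1) - h i|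
            + ∑ i ∈ Finset.Ico k j, |h (i + 1) - h i|
            + ∑ i ∈ Finset.Ico j N, |h (i + 1) - h i| := by
        rw [← Finset.sum_Ico_consecutive (fun i => |h (i + 1) - h i|)
            (by omega : 1 ≤ k) (by omega : k ≤ N),
          ← Finset.sum_Ico_consecutive (fun i => |h (i + 1) - h i|)
            (by omega : k ≤ j) (by omega : j ≤ N)]
        ring
      have hpv : peakVar g n (fun i => x (P i)) (fun i => x (R i))
          = ∑ i ∈ Finset.range n, (2 * h (R i) - h (P i) - h (P (i + 1))) := rfl
      show ∑ i ∈ Finset.Ico 1 N, |h (i + 1) - h i| ≤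
        (h 1 - h k) + peakVar g n (fun i => x (P i)) (fun i => x (R i)) + (h N - h j)
      rw [split1, e1, e3, hpv]
      linarith
  · -- Case j ≤ k
    intro hjk
    have e1 : ∑ i ∈ Finset.Ico 1 j, |h (i + 1) - h i| = h 1 - h j :=
      ntm_tele_dec h 1 j (by omega) (fun i hi hij => hdecL i hi (by omega))
    have e3 : ∑ i ∈ Finset.Ico k N, |h (i + 1) - h i| = h N - h k :=
      ntm_tele_inc h k N (by omega) (fun i hi hiN => hincR i (by omega) hiN)
    have e2 : ∑ i ∈ Finset.Ico j k, |h (i + 1) - h i| = 0 := by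
      apply Finset.sum_eq_zero
      intro i hi
      rw [Finset.mem_Ico] at hi
      have hle1 : h (i + 1) ≤ h i := hdecL i (by omega) hi.2
      have hle2 : h i ≤ h (i + 1) := hincR i hi.1 (by omega)
      rw [abs_eq_zero]
      linarith
    have split1 : ∑ i ∈ Finset.Ico 1 N, |h (i + 1) - h i|
        = ∑ i ∈ Finset.Ico 1 j, |h (i + 1) - h i|
          + ∑ i ∈ Finset.Ico j k, |h (i + 1) - h i|
          + ∑ i ∈ Finset.Ico k N, |h (i + 1) - h i| := by
      rw [← Finset.sum_Ico_consecutive (fun i => |h (i + 1) - h i|)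
          (by omega : 1 ≤ j) (by omega : j ≤ N),
        ← Finset.sum_Ico_consecutive (fun i => |h (i + 1) - h i|)
          (by omega : j ≤ k) (by omega : k ≤ N)]
      ring
    show ∑ i ∈ Finset.Ico 1 N, |h (i + 1) - h i| ≤ (h 1 - h j) + (h N - h k)
    rw [split1, e1, e2, e3]
    linarith
end

section
/- Let f : ℝ → ℝ be nonnegative, measurable and of bounded variation, let α ≥ 1/3, and let x < y be real numbers with M^α f(x) < M^α f(y). Then for every ε > 0 and every δ > 0 there exist real numbers z and w with x − ε < z < w and x < w, such that f(w) ≥ M^α f(y) − δ and f(z) ≤ M^α f(x); in particular M^α f(y) − M^α f(x) ≤ f(w) − f(z) + δ. -/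
open MeasureTheory

lemma aux_bdd (f : ℝ → ℝ) (hbv : eVariationOn f Set.univ ≠ ⊤) :
    ∃ C : ℝ, ∀ s, f s ≤ C := by
  refine ⟨f 0 + (eVariationOn f Set.univ).toReal, fun s => ?_⟩
  have h := eVariationOn.edist_le f (Set.mem_univ s) (Set.mem_univ 0)
  rw [edist_dist] at h
  have h2 : dist (f s) (f 0) ≤ (eVariationOn f Set.univ).toReal :=
    (ENNReal.ofReal_le_iff_le_toReal hbv).mp h
  rw [Real.dist_eq] at h2
  have := le_abs_self (f s - f 0)
  linarith

lemma aux_ii (f : ℝ → ℝ) (hm : Measurable f) (hf0 : ∀ x, 0 ≤ f x) (C : ℝ)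
    (hC : ∀ s, f s ≤ C) : ∀ a b : ℝ, IntervalIntegrable f volume a b := by
  intro a b
  rw [intervalIntegrable_iff]
  apply Integrable.mono' (g := fun _ => C)
  · exact (integrableOn_const_iff).mpr (Or.inr measure_Ioc_lt_top)
  · exact hm.aestronglyMeasurable.restrict
  · refine ae_of_all _ fun s => ?_
    rw [Real.norm_eq_abs, abs_of_nonneg (hf0 s)]
    exact hC s

lemma aux_ioo (f : ℝ → ℝ) (hm : Measurable f) (hf0 : ∀ x, 0 ≤ f x) (C : ℝ)
    (hC : ∀ s, f s ≤ C) : ∀ a b : ℝ, IntegrableOn f (Set.Ioo a b) volume := by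
  intro a b
  rcases le_or_gt a b with h | h
  · exact ((intervalIntegrable_iff_integrableOn_Ioc_of_le h).mp
      (aux_ii f hm hf0 C hC a b)).mono_set Set.Ioo_subset_Ioc_self
  · simp [Set.Ioo_eq_empty (le_of_lt h).not_gt]

lemma aux_le (f : ℝ → ℝ) (K a b : ℝ) (hab : a ≤ b)
    (hint : IntegrableOn f (Set.Ioo a b) volume)
    (hK : ∀ s ∈ Set.Ioo a b, f s ≤ K) :
    (∫ s in a..b, f s) ≤ K * (b - a) := by
  rw [intervalIntegral.integral_of_le hab, integral_Ioc_eq_integral_Ioo]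
  calc (∫ s in Set.Ioo a b, f s) ≤ ∫ _ in Set.Ioo a b, K :=
        setIntegral_mono_on hint ((integrableOn_const_iff).mpr (Or.inr measure_Ioo_lt_top))
          measurableSet_Ioo hK
    _ = K * (b - a) := by
        rw [setIntegral_const, Real.volume_real_Ioo_of_le (by linarith), smul_eq_mul]
        ring

lemma aux_pt (f : ℝ → ℝ) (K a b : ℝ) (hab : a < b)
    (hint : IntegrableOn f (Set.Ioo a b) volume)
    (h : (∫ s in Set.Ioo a b, f s) ≤ K * (b - a)) :
    ∃ p ∈ Set.Ioo a b, f p ≤ K := by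
  by_contra hc
  push_neg at hc
  have hKint : IntegrableOn (fun _ : ℝ => K) (Set.Ioo a b) volume :=
    (integrableOn_const_iff).mpr (Or.inr measure_Ioo_lt_top)
  have hgint : IntegrableOn (fun s => f s - K) (Set.Ioo a b) volume := hint.sub hKint
  have hKconst : (∫ _ in Set.Ioo a b, K) = K * (b - a) := by
    rw [setIntegral_const, Real.volume_real_Ioo_of_le (by linarith), smul_eq_mul]
    ring
  have h2 : (∫ s in Set.Ioo a b, (f s - K)) ≤ 0 := by
    rw [integral_sub hint hKint, hKconst]
    linarith
  have h3 : 0 ≤ᵐ[volume.restrict (Set.Ioo a b)] fun s => f s - K := by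
    rw [Filter.EventuallyLE, ae_restrict_iff' measurableSet_Ioo]
    exact ae_of_all _ fun s hs => by have := hc s hs; simp; linarith
  have h4 : (∫ s in Set.Ioo a b, (f s - K)) = 0 :=
    le_antisymm h2 (integral_nonneg_of_ae h3)
  have h5 : (fun s => f s - K) =ᵐ[volume.restrict (Set.Ioo a b)] 0 :=
    (integral_eq_zero_iff_of_nonneg_ae h3 hgint).mp h4
  have h6 : ∀ᵐ s ∂(volume.restrict (Set.Ioo a b)), False := by
    filter_upwards [h5, ae_restrict_mem measurableSet_Ioo] with s hs hmem
    have := hc s hmem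
    have hz : f s - K = 0 := hs
    linarith
  have h7 : volume (Set.Ioo a b) = 0 := by
    rw [← Measure.restrict_eq_zero, ← ae_eq_bot]
    exact Filter.eventually_false_iff_eq_bot.mp h6
  rw [Real.volume_Ioo] at h7
  have := ENNReal.ofReal_eq_zero.mp h7
  linarith
/-- If `M^α f(x) < M^α f(y)` with `x < y`, then for all `ε, δ > 0` there are
`z < w` with `z ∈ (x − ε, ∞)`, `w ∈ (x, ∞)` such that `f(w) ≥ M^α f(y) − δ` and
`f(z) ≤ M^α f(x)`; in particular `M^α f(y) − M^α f(x) ≤ f(w) − f(z) + δ`. -/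
theorem ntMax_extremos (f : ℝ → ℝ) (hf0 : ∀ x, 0 ≤ f x) (hm : Measurable f)
    (hbv : eVariationOn f Set.univ ≠ ⊤) (α : ℝ) (hα : 1 / 3 ≤ α)
    (x y : ℝ) (hxy : x < y) (hM : ntMax α f x < ntMax α f y)
    (ε δ : ℝ) (hε : 0 < ε) (hδ : 0 < δ) :
    ∃ z w : ℝ, x - ε < z ∧ z < w ∧ x < w ∧
      ntMax α f y - δ ≤ f w ∧ f z ≤ ntMax α f x ∧
      ntMax α f y - ntMax α f x ≤ f w - f z + δ := by
  obtain ⟨C, hC⟩ := aux_bdd f hbv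
  have hα0 : (0:ℝ) < α := lt_of_lt_of_le (by norm_num) hα
  have hii := aux_ii f hm hf0 C hC
  have hioo := aux_ioo f hm hf0 C hC
  have habs : ∀ a b : ℝ, (∫ s in a..b, |f s|) = ∫ s in a..b, f s := fun a b =>
    intervalIntegral.integral_congr fun s _ => abs_of_nonneg (hf0 s)
  set S : ℝ → Set ℝ := fun p => { a : ℝ | ∃ t : ℝ, 0 < t ∧ ∃ c : ℝ, |p - c| ≤ α * t ∧
    a = (1 / (2 * t)) * ∫ s in (c - t)..(c + t), |f s| } with hSdef
  have hMax : ∀ p, ntMax α f p = sSup (S p) := fun p => rfl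
  have hSb : ∀ p, BddAbove (S p) := by
    intro p
    refine ⟨C, ?_⟩
    rintro a ⟨t, ht, c, hc, rfl⟩
    rw [habs]
    have h1 : (∫ s in (c - t)..(c + t), f s) ≤ C * ((c + t) - (c - t)) :=
      aux_le f C _ _ (by linarith) (hioo _ _) (fun s _ => hC s)
    have h2 : C * ((c + t) - (c - t)) = C * (2 * t) := by ring
    rw [h2] at h1
    calc 1 / (2 * t) * ∫ s in (c - t)..(c + t), f s
        ≤ 1 / (2 * t) * (C * (2 * t)) := by
          apply mul_le_mul_of_nonneg_left h1 (by positivity)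
      _ = C := by field_simp
  have hSne : ∀ p, (S p).Nonempty := by
    intro p
    exact ⟨_, 1, one_pos, p, by simpa using hα0.le, rfl⟩
  have avg_le : ∀ p t c : ℝ, 0 < t → |p - c| ≤ α * t →
      (1 / (2 * t)) * (∫ s in (c - t)..(c + t), f s) ≤ ntMax α f p := by
    intro p t c ht hc
    rw [hMax, ← habs]
    exact le_csSup (hSb p) ⟨t, ht, c, hc, rfl⟩
  set u := ntMax α f y with hu
  set v := ntMax α f x with hv
  have hmaxlt : max v (u - δ) < u := max_lt hM (by linarith)
  obtain ⟨A, hAS, hAgt⟩ := exists_lt_of_lt_csSup (hSne y) (by rw [← hMax]; exact hmaxlt)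
  obtain ⟨t, ht, c, hyc, hAeq⟩ := hAS
  have hAv : v < A := lt_of_le_of_lt (le_max_left _ _) hAgt
  have hAu : u - δ < A := lt_of_le_of_lt (le_max_right _ _) hAgt
  have hAle : (1 / (2 * t)) * (∫ s in (c - t)..(c + t), f s) = A := by
    rw [← habs]; exact hAeq.symm
  have hAeq' : (∫ s in (c - t)..(c + t), f s) = 2 * t * A := by
    have h2t : (2 * t) ≠ 0 := by positivity
    field_simp at hAle
    linarith
  have hxc : α * t < |x - c| := by
    by_contra h
    push_neg at h
    have := avg_le x t c ht h
    rw [hAle] at this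
    exact absurd this (not_le.mpr hAv)
  have hxltc : x < c := by
    by_contra h
    push_neg at h
    rw [abs_of_nonneg (by linarith)] at hxc
    have h2 : y - c ≤ α * t := le_trans (le_abs_self _) hyc
    linarith
  have hct : α * t < c - x := by
    rw [abs_of_neg (by linarith)] at hxc
    linarith
  -- find w
  have hw : ∃ w ∈ Set.Ioo x (c + t), u - δ ≤ f w := by
    by_contra hno
    push_neg at hno
    rcases le_or_gt x (c - t) with hcase | hcase
    · have hb : (∫ s in (c - t)..(c + t), f s) ≤ (u - δ) * ((c + t) - (c - t)) :=
        aux_le f _ _ _ (by linarith) (hioo _ _)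
          (fun s hs => (hno s ⟨lt_of_le_of_lt hcase hs.1, hs.2⟩).le)
      rw [hAeq'] at hb
      nlinarith
    · set ℓ := x - (c - t) with hℓ
      have hℓ0 : 0 < ℓ := by simp only [hℓ]; linarith
      have hℓt : ℓ < (1 - α) * t := by simp only [hℓ]; nlinarith
      have hα1 : α < 1 := by nlinarith
      set s0 := ℓ / (1 - α) with hs0
      have hs00 : 0 < s0 := div_pos hℓ0 (by linarith)
      have hkey : s0 * (1 - α) = ℓ := div_mul_cancel₀ _ (by linarith)
      have hs0t : s0 < t := by nlinarith
      have hs0ℓ : ℓ ≤ s0 := by nlinarith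
      have hs0eq : s0 - ℓ = α * s0 := by linear_combination hkey
      set m := c - t + 2 * s0 with hmdef
      have hJ : (1 / (2 * s0)) * (∫ s in ((c - t + s0) - s0)..((c - t + s0) + s0), f s) ≤ v := by
        apply avg_le x s0 (c - t + s0) hs00
        rw [abs_of_nonpos (by linarith)]
        have : -(x - (c - t + s0)) = s0 - ℓ := by simp only [hℓ]; ring
        rw [this, hs0eq]
      have hends1 : (c - t + s0) - s0 = c - t := by ring
      have hends2 : (c - t + s0) + s0 = m := by rw [hmdef]; ring
      rw [hends1, hends2] at hJ
      have h1 : (∫ s in (c - t)..m, f s) ≤ 2 * s0 * v := by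
        have h2s0 : (0:ℝ) < 2 * s0 := by linarith
        rw [one_div_mul_eq_div] at hJ
        have := (div_le_iff₀ h2s0).mp hJ
        linarith
      have h2 : (∫ s in m..(c + t), f s) ≤ (u - δ) * ((c + t) - m) := by
        apply aux_le f _ _ _ (by simp only [hmdef]; linarith) (hioo _ _)
        intro p hp
        refine (hno p ⟨?_, hp.2⟩).le
        have : x < m := by simp only [hmdef, hℓ] at *; linarith
        linarith [hp.1]
      have hsplit : (∫ s in (c - t)..m, f s) + (∫ s in m..(c + t), f s)
          = ∫ s in (c - t)..(c + t), f s :=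
        intervalIntegral.integral_add_adjacent_intervals (hii _ _) (hii _ _)
      rw [hAeq'] at hsplit
      have hcm : (c + t) - m = 2 * t - 2 * s0 := by rw [hmdef]; ring
      rw [hcm] at h2
      have e1 : 2 * s0 * v < 2 * s0 * A :=
        mul_lt_mul_of_pos_left hAv (by linarith)
      have e2 : (u - δ) * (2 * t - 2 * s0) < A * (2 * t - 2 * s0) :=
        mul_lt_mul_of_pos_right hAu (by linarith)
      have e3 : 2 * s0 * A + A * (2 * t - 2 * s0) = 2 * t * A := by ring
      linarith
  obtain ⟨w, hwmem, hwf⟩ := hw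
  have hxw : x < w := hwmem.1
  -- find z
  set r := min ε (w - x) / 2 with hr
  have hr0 : 0 < r := by
    rw [hr]
    exact div_pos (lt_min hε (by linarith)) two_pos
  have hIx : (1 / (2 * r)) * (∫ s in (x - r)..(x + r), f s) ≤ v := by
    apply avg_le x r x hr0
    simpa using by positivity
  have hzb : (∫ s in Set.Ioo (x - r) (x + r), f s) ≤ v * ((x + r) - (x - r)) := by
    have heq : (∫ s in (x - r)..(x + r), f s) = ∫ s in Set.Ioo (x - r) (x + r), f s := by
      rw [intervalIntegral.integral_of_le (by linarith), integral_Ioc_eq_integral_Ioo]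
    have h2r : ((x + r) - (x - r)) = 2 * r := by ring
    rw [← heq, h2r]
    have h2r0 : (0:ℝ) < 2 * r := by linarith
    rw [one_div_mul_eq_div] at hIx
    have := (div_le_iff₀ h2r0).mp hIx
    linarith
  obtain ⟨z, hzmem, hzf⟩ := aux_pt f v _ _ (by linarith) (hioo _ _) hzb
  refine ⟨z, w, ?_, ?_, hxw, by linarith [hwf], hzf, by linarith [hwf, hzf]⟩
  · have := min_le_left ε (w - x)
    have h1 := hzmem.1
    rw [hr] at h1
    linarith
  · have := min_le_right ε (w - x)
    have h2 := hzmem.2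
    rw [hr] at h2
    linarith
end

section
/- Let f : ℝ → ℝ be nonnegative, measurable and of bounded variation, and let α ≥ 1/3. Let p_0 < r_0 < p_1 < r_1 < … < r_n < p_{n+1} be real numbers such that M^α f(p_i) < M^α f(r_i) > M^α f(p_{i+1}) for every 0 ≤ i ≤ n. Then for every δ > 0 there exist real numbers a_0 < b_0 < a_1 < b_1 < … < b_n < a_{n+1} such that f(a_i) ≤ M^α f(p_i) for every 0 ≤ i ≤ n+1 and f(b_i) ≥ M^α f(r_i) − δ for every 0 ≤ i ≤ n; in particular Σ_{i=0}^{n} (2·M^α f(r_i) − M^α f(p_i) − M^α f(p_{i+1})) ≤ Σ_{i=0}^{n} (2f(b_i) − f(a_i) − f(a_{i+1})) + 2(n+1)δ. -/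
open MeasureTheory

set_option maxHeartbeats 1000000

section NtAux
variable {f : ℝ → ℝ} {α : ℝ} {C : ℝ}

private lemma ntAux_absf (hf0 : ∀ x, 0 ≤ f x) : (fun s => |f s|) = f :=
  funext fun s => abs_of_nonneg (hf0 s)

private lemma ntAux_bound (hbv : eVariationOn f Set.univ ≠ ⊤) :
    ∃ C : ℝ, ∀ x, f x ≤ C := by
  refine ⟨f 0 + (eVariationOn f Set.univ).toReal, fun x => ?_⟩
  have h := eVariationOn.edist_le f (Set.mem_univ x) (Set.mem_univ 0)
  have h2 := ENNReal.toReal_mono hbv h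
  rw [edist_dist, ENNReal.toReal_ofReal dist_nonneg, Real.dist_eq] at h2
  have h3 : f x - f 0 ≤ |f x - f 0| := le_abs_self _
  linarith

private lemma ntAux_intable (hm : Measurable f) (hf0 : ∀ x, 0 ≤ f x)
    (hC : ∀ x, f x ≤ C) (a b : ℝ) : IntervalIntegrable f volume a b := by
  refine IntervalIntegrable.mono_fun' (g := fun _ => C) intervalIntegrable_const
    (hm.aestronglyMeasurable.restrict) (ae_of_all _ fun x => ?_)
  simp only [Real.norm_eq_abs, abs_of_nonneg (hf0 x)]
  exact hC x

private lemma ntAux_bdd (hm : Measurable f) (hf0 : ∀ x, 0 ≤ f x) (hC : ∀ x, f x ≤ C) (x : ℝ) :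
    BddAbove { a : ℝ | ∃ t : ℝ, 0 < t ∧ ∃ y : ℝ, |x - y| ≤ α * t ∧
      a = (1 / (2 * t)) * ∫ s in (y - t)..(y + t), |f s| } := by
  refine ⟨C, fun a ha => ?_⟩
  obtain ⟨t, ht, y, -, rfl⟩ := ha
  rw [ntAux_absf hf0]
  have h1 : ∫ s in (y - t)..(y + t), f s ≤ ∫ s in (y - t)..(y + t), C := by
    apply intervalIntegral.integral_mono_on (by linarith) (ntAux_intable hm hf0 hC _ _)
      intervalIntegrable_const
    exact fun s _ => hC s
  rw [intervalIntegral.integral_const, smul_eq_mul] at h1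
  have h2t : (0:ℝ) < 2 * t := by linarith
  rw [div_mul_eq_mul_div, one_mul, div_le_iff₀ h2t]
  calc ∫ s in (y - t)..(y + t), f s ≤ (y + t - (y - t)) * C := h1
    _ = C * (2 * t) := by ring

private lemma ntAux_nonempty (hα : 0 < α) (x : ℝ) :
    Set.Nonempty { a : ℝ | ∃ t : ℝ, 0 < t ∧ ∃ y : ℝ, |x - y| ≤ α * t ∧
      a = (1 / (2 * t)) * ∫ s in (y - t)..(y + t), |f s| } :=
  ⟨_, 1, one_pos, x, by simp [abs_of_nonneg, le_of_lt hα], rfl⟩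

/-- averages over admissible intervals are at most the maximal function -/
private lemma ntAux_le (hm : Measurable f) (hf0 : ∀ x, 0 ≤ f x) (hC : ∀ x, f x ≤ C)
    {x c d : ℝ} (hcd : c < d) (hadm : |x - (c + d) / 2| ≤ α * ((d - c) / 2)) :
    ∫ s in c..d, f s ≤ ntMax α f x * (d - c) := by
  set t := (d - c) / 2 with htdef
  have ht : 0 < t := by simp only [htdef]; linarith
  have hmem : (1 / (2 * t)) * ∫ s in ((c + d)/2 - t)..((c + d)/2 + t), |f s| ∈
      { a : ℝ | ∃ t : ℝ, 0 < t ∧ ∃ y : ℝ, |x - y| ≤ α * t ∧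
        a = (1 / (2 * t)) * ∫ s in (y - t)..(y + t), |f s| } :=
    ⟨t, ht, (c + d)/2, hadm, rfl⟩
  have hle := le_csSup (ntAux_bdd hm hf0 hC x) hmem
  have hsup : sSup { a : ℝ | ∃ t : ℝ, 0 < t ∧ ∃ y : ℝ, |x - y| ≤ α * t ∧
      a = (1 / (2 * t)) * ∫ s in (y - t)..(y + t), |f s| } = ntMax α f x := rfl
  rw [hsup] at hle
  have he1 : (c + d)/2 - t = c := by simp only [htdef]; ring
  have he2 : (c + d)/2 + t = d := by simp only [htdef]; ring
  rw [he1, he2, ntAux_absf hf0] at hle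
  have h2t : (0:ℝ) < 2 * t := by linarith
  rw [div_mul_eq_mul_div, one_mul, div_le_iff₀ h2t] at hle
  calc ∫ s in c..d, f s ≤ ntMax α f x * (2 * t) := hle
    _ = ntMax α f x * (d - c) := by rw [htdef]; ring

private lemma ntAux_nonneg (hm : Measurable f) (hα : 0 < α) (hf0 : ∀ x, 0 ≤ f x)
    (hC : ∀ x, f x ≤ C) (x : ℝ) : 0 ≤ ntMax α f x := by
  have h := ntAux_le (α := α) (x := x) (c := x - 1) (d := x + 1) hm hf0 hC
    (show x - 1 < x + 1 by linarith)
    (by rw [show (x - 1 + (x + 1))/2 = x by ring, show ((x+1) - (x-1))/2 = 1 by ring]; simpa using le_of_lt hα)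
  have hpos : 0 ≤ ∫ s in (x-1)..(x+1), f s :=
    intervalIntegral.integral_nonneg (by linarith) (fun s _ => hf0 s)
  nlinarith [h]

private lemma ntAux_small (hm : Measurable f) (hα : 0 < α) (hf0 : ∀ x, 0 ≤ f x)
    (hC : ∀ x, f x ≤ C) (x s : ℝ) (hs : 0 < s) :
    ∃ a, x - s < a ∧ a < x + s ∧ f a ≤ ntMax α f x := by
  by_contra hcon
  push_neg at hcon
  set u := ntMax α f x with hu
  have hint : ∫ z in (x-s)..(x+s), f z ≤ u * (x + s - (x - s)) := by
    refine ntAux_le hm hf0 hC (by linarith) ?_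
    rw [show (x - s + (x + s))/2 = x by ring]
    rw [show ((x+s) - (x-s))/2 = s by ring]
    simp only [sub_self, abs_zero]
    positivity
  set g : ℝ → ℝ := fun z => f z - u with hg
  have hfIoo : IntegrableOn f (Set.Ioo (x-s) (x+s)) volume :=
    ((ntAux_intable hm hf0 hC (x-s) (x+s)).1).mono_set Set.Ioo_subset_Ioc_self
  have hconst : IntegrableOn (fun _ : ℝ => u) (Set.Ioo (x-s) (x+s)) volume :=
    integrableOn_const measure_Ioo_lt_top.ne
  have hgint : IntegrableOn g (Set.Ioo (x-s) (x+s)) volume := hfIoo.sub hconst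
  have hpos0 : 0 ≤ᵐ[volume.restrict (Set.Ioo (x-s) (x+s))] g := by
    refine (ae_restrict_iff' measurableSet_Ioo).2 (ae_of_all _ fun z hz => ?_)
    have := hcon z hz.1 hz.2
    simp only [hg, Pi.zero_apply]
    linarith
  have hsupp : Set.Ioo (x-s) (x+s) ⊆ Function.support g := by
    intro z hz
    have := hcon z hz.1 hz.2
    simp only [Function.mem_support, hg]
    intro hzero
    linarith [sub_eq_zero.1 hzero]
  have hμ : 0 < volume (Function.support g ∩ Set.Ioo (x-s) (x+s)) := by
    have h1 : (0:ENNReal) < volume (Set.Ioo (x-s) (x+s)) := by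
      rw [Real.volume_Ioo]
      exact ENNReal.ofReal_pos.2 (by linarith)
    exact lt_of_lt_of_le h1 (measure_mono (Set.subset_inter hsupp Set.Subset.rfl))
  have hposint := (setIntegral_pos_iff_support_of_nonneg_ae hpos0 hgint).2 hμ
  have h1 : ∫ z in Set.Ioo (x-s) (x+s), f z = ∫ z in (x-s)..(x+s), f z := by
    rw [intervalIntegral.integral_of_le (by linarith : x - s ≤ x + s),
      integral_Ioc_eq_integral_Ioo]
  have h2 : ∫ z in Set.Ioo (x-s) (x+s), g z
      = (∫ z in Set.Ioo (x-s) (x+s), f z) - u * (2*s) := by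
    rw [integral_sub hfIoo hconst, setIntegral_const, Real.volume_real_Ioo_of_le (by linarith), smul_eq_mul,
      show (x + s - (x - s)) = 2*s by ring]
    ring
  rw [h2, h1] at hposint
  have : u * (x + s - (x - s)) = u * (2*s) := by ring_nf
  linarith
/-- The maximum principle: if the maximal function at `r` exceeds its values at `p < r < q`,
then `f` nearly attains `ntMax α f r` somewhere inside `(p, q)`. -/
private lemma ntAux_claimC (hm : Measurable f) (hα : 1/3 ≤ α) (hf0 : ∀ x, 0 ≤ f x)
    (hC : ∀ x, f x ≤ C) {p r q δ : ℝ} (hpr : p < r) (hrq : r < q)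
    (hup : ntMax α f p < ntMax α f r) (huq : ntMax α f q < ntMax α f r) (hδ : 0 < δ) :
    ∃ b, p < b ∧ b < q ∧ ntMax α f r - δ ≤ f b := by
  have hα0 : 0 < α := by linarith
  by_contra hcon
  push_neg at hcon
  -- hcon : ∀ b, p < b → b < q → f b < ntMax α f r - δ
  obtain ⟨δ', hδ'def⟩ : ∃ d : ℝ,
      d = min δ (min (ntMax α f r - ntMax α f p) (ntMax α f r - ntMax α f q)) / 2 := ⟨_, rfl⟩
  have hδ'pos : 0 < δ' := by
    rw [hδ'def]
    have h1 : 0 < min δ (min (ntMax α f r - ntMax α f p) (ntMax α f r - ntMax α f q)) :=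
      lt_min hδ (lt_min (by linarith) (by linarith))
    linarith
  have hlt : ntMax α f r - δ' < ntMax α f r := by linarith
  unfold ntMax at hlt
  obtain ⟨A, hAmem, hAgt⟩ := exists_lt_of_lt_csSup (ntAux_nonempty (f := f) hα0 r) hlt
  have hAgt' : ntMax α f r - δ' < A := hAgt
  clear hlt hAgt
  obtain ⟨t, ht, y, hadm, hAeq⟩ := hAmem
  rw [ntAux_absf hf0] at hAeq
  have h2t : (0:ℝ) < 2 * t := by linarith
  have hIA : ∫ s in (y - t)..(y + t), f s = A * (2 * t) := by
    rw [hAeq]; field_simp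
  -- the three key upper bounds
  have hupA : ntMax α f p ≤ A - δ' := by
    have : 2 * δ' ≤ ntMax α f r - ntMax α f p := by
      rw [hδ'def]
      have : min δ (min (ntMax α f r - ntMax α f p) (ntMax α f r - ntMax α f q)) ≤
          ntMax α f r - ntMax α f p := le_trans (min_le_right _ _) (min_le_left _ _)
      linarith
    linarith
  have huqA : ntMax α f q ≤ A - δ' := by
    have : 2 * δ' ≤ ntMax α f r - ntMax α f q := by
      rw [hδ'def]
      have : min δ (min (ntMax α f r - ntMax α f p) (ntMax α f r - ntMax α f q)) ≤
          ntMax α f r - ntMax α f q := le_trans (min_le_right _ _) (min_le_right _ _)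
      linarith
    linarith
  have hcA : ntMax α f r - δ ≤ A - δ' := by
    have : 2 * δ' ≤ δ := by rw [hδ'def]; have := min_le_left δ (min (ntMax α f r - ntMax α f p) (ntMax α f r - ntMax α f q)); linarith
    linarith
  -- whole interval average bound at a point w
  have hwhole : ∀ w : ℝ, |w - y| ≤ α * t → A ≤ ntMax α f w := by
    intro w hw
    have h := ntAux_le (α := α) hm hf0 hC (show y - t < y + t by linarith)
      (by rw [show (y - t + (y + t))/2 = y by ring, show ((y + t) - (y - t))/2 = t by ring]
          exact hw)
    rw [hIA] at h
    have := (mul_le_mul_iff_left₀ h2t).1 (by linarith [h] :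
      A * (2 * t) ≤ ntMax α f w * (2 * t))
    linarith
  have habs : |r - y| ≤ α * t := hadm
  -- p < y < q
  have hpy : p < y := by
    by_contra hyp
    push_neg at hyp
    have : |p - y| ≤ α * t := by
      rw [abs_of_nonneg (by linarith)]
      have : r - y ≤ |r - y| := le_abs_self _
      linarith
    have := hwhole p this
    linarith
  have hyq : y < q := by
    by_contra hyq
    push_neg at hyq
    have : |p - y| ≤ α * t → True := fun _ => trivial
    have h2 : |q - y| ≤ α * t := by
      rw [abs_of_nonpos (by linarith)]
      have h3 : -(r - y) ≤ |r - y| := neg_le_abs _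
      linarith
    have := hwhole q h2
    linarith
  have hpyt : α * t < y - p := by
    by_contra hh
    push_neg at hh
    have : |p - y| ≤ α * t := by rw [abs_of_nonpos (by linarith)]; linarith
    have := hwhole p this
    linarith
  have hqyt : α * t < q - y := by
    by_contra hh
    push_neg at hh
    have : |q - y| ≤ α * t := by rw [abs_of_nonneg (by linarith)]; linarith
    have := hwhole q this
    linarith
  -- the covering construction
  obtain ⟨κ, hκdef⟩ : ∃ κ : ℝ, κ = (1 - α)/(1 + α) := ⟨_, rfl⟩
  have h1α : (0:ℝ) < 1 + α := by linarith
  have hκ1 : κ + 1 = 2 / (1 + α) := by rw [hκdef]; field_simp; ring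
  have hκ1pos : 0 < κ + 1 := by rw [hκ1]; positivity
  have hκhalf : κ ≤ 1/2 := by
    rw [hκdef, div_le_iff₀ h1α]; linarith
  have hκeq : 1 - κ = α * (1 + κ) := by rw [hκdef]; field_simp; ring
  obtain ⟨l, hldef⟩ : ∃ l : ℝ, l = p - (y - t) := ⟨_, rfl⟩
  obtain ⟨ρ, hρdef⟩ : ∃ ρ : ℝ, ρ = (y + t) - q := ⟨_, rfl⟩
  obtain ⟨x₁, hx1def⟩ : ∃ x₁ : ℝ, x₁ = max (y - t) (p + κ * l) := ⟨_, rfl⟩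
  obtain ⟨x₂, hx2def⟩ : ∃ x₂ : ℝ, x₂ = min (y + t) (q - κ * ρ) := ⟨_, rfl⟩
  have hx1ge : y - t ≤ x₁ := hx1def ▸ le_max_left _ _
  have hx2le : x₂ ≤ y + t := hx2def ▸ min_le_left _ _
  have hx1p : p ≤ x₁ := by
    rcases le_or_gt l 0 with hl | hl
    · have : p ≤ y - t := by rw [hldef] at hl; linarith
      linarith [hx1ge]
    · have hκpos : 0 < κ := by
        have hα1 : α < 1 := by
          by_contra hge; push_neg at hge
          have := le_mul_of_one_le_left ht.le hge
          linarith
        rw [hκdef]; exact div_pos (by linarith) h1α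
      have : p ≤ p + κ * l := by linarith [(mul_pos hκpos hl).le]
      exact le_trans this (hx1def ▸ le_max_right _ _)
  have hx2q : x₂ ≤ q := by
    rcases le_or_gt ρ 0 with hl | hl
    · have : y + t ≤ q := by rw [hρdef] at hl; linarith
      linarith [hx2le]
    · have hκpos : 0 < κ := by
        have hα1 : α < 1 := by
          by_contra hge; push_neg at hge
          have := le_mul_of_one_le_left ht.le hge
          linarith
        rw [hκdef]; exact div_pos (by linarith) h1α
      have : q - κ * ρ ≤ q := by linarith [(mul_pos hκpos hl).le]
      exact le_trans (hx2def ▸ min_le_right _ _) this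
  have hx1y : x₁ < y := by
    rw [hx1def]
    apply max_lt (by linarith)
    rcases le_or_gt l 0 with hl | hl
    · have h0 : (κ + 1) * l ≤ 0 := mul_nonpos_of_nonneg_of_nonpos hκ1pos.le hl
      have : p + κ * l ≤ y - t := by nlinarith [h0]
      linarith
    · -- l > 0 : κ l ≤ l/2 < y - p
      have h3 : t < 3 * (y - p) := by
        have := mul_le_mul_of_nonneg_right hα ht.le
        linarith
      have hl2 : l / 2 < y - p := by linarith
      have : κ * l ≤ l / 2 := by linarith [mul_le_mul_of_nonneg_right hκhalf hl.le]
      linarith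
  have hyx2 : y < x₂ := by
    rw [hx2def]
    apply lt_min (by linarith)
    rcases le_or_gt ρ 0 with hl | hl
    · have h0 : (κ + 1) * ρ ≤ 0 := mul_nonpos_of_nonneg_of_nonpos hκ1pos.le hl
      have : y + t ≤ q - κ * ρ := by nlinarith [h0]
      linarith
    · have h3 : t < 3 * (q - y) := by
        have := mul_le_mul_of_nonneg_right hα ht.le
        linarith
      have hl2 : ρ / 2 < q - y := by linarith
      have : κ * ρ ≤ ρ / 2 := by linarith [mul_le_mul_of_nonneg_right hκhalf hl.le]
      linarith
  -- Bound 1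
  have hB1 : ∫ s in (y - t)..x₁, f s ≤ ntMax α f p * (x₁ - (y - t)) := by
    rcases le_or_gt l 0 with hl | hl
    · have hx1eq : x₁ = y - t := by
        rw [hx1def, max_eq_left]
        have h0 : (κ + 1) * l ≤ 0 := mul_nonpos_of_nonneg_of_nonpos hκ1pos.le hl
        nlinarith [h0]
      rw [hx1eq]
      simp [intervalIntegral.integral_same]
    · have hκpos : 0 < κ := by
        have hα1 : α < 1 := by
          by_contra hge; push_neg at hge
          have := le_mul_of_one_le_left ht.le hge
          linarith
        rw [hκdef]; exact div_pos (by linarith) h1α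
      have hx1eq : x₁ = p + κ * l := by
        rw [hx1def, max_eq_right]
        linarith [(mul_pos hκpos hl).le]
      have hyt : y - t = p - l := by rw [hldef]; ring
      rw [hx1eq]
      apply ntAux_le hm hf0 hC
      · rw [hyt]; linarith [(mul_pos hκpos hl).le]
      · rw [hyt, show (p - l + (p + κ * l))/2 = p + (κ * l - l)/2 by ring,
          show (p + κ * l - (p - l))/2 = (l + κ * l)/2 by ring,
          show p - (p + (κ * l - l)/2) = (l - κ * l)/2 by ring,
          abs_of_nonneg (by
            linarith [mul_le_mul_of_nonneg_right hκhalf hl.le] : (0:ℝ) ≤ (l - κ * l)/2)]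
        have hmul := mul_le_mul_of_nonneg_right (le_of_eq hκeq) hl.le
        nlinarith [hmul]
  -- Bound 3
  have hB3 : ∫ s in x₂..(y + t), f s ≤ ntMax α f q * ((y + t) - x₂) := by
    rcases le_or_gt ρ 0 with hl | hl
    · have hx2eq : x₂ = y + t := by
        rw [hx2def, min_eq_left]
        have h0 : (κ + 1) * ρ ≤ 0 := mul_nonpos_of_nonneg_of_nonpos hκ1pos.le hl
        nlinarith [h0]
      rw [hx2eq]
      simp [intervalIntegral.integral_same]
    · have hκpos : 0 < κ := by
        have hα1 : α < 1 := by
          by_contra hge; push_neg at hge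
          have := le_mul_of_one_le_left ht.le hge
          linarith
        rw [hκdef]; exact div_pos (by linarith) h1α
      have hx2eq : x₂ = q - κ * ρ := by
        rw [hx2def, min_eq_right]
        linarith [(mul_pos hκpos hl).le]
      have hyt : y + t = q + ρ := by rw [hρdef]; ring
      rw [hx2eq]
      apply ntAux_le hm hf0 hC
      · rw [hyt]; linarith [(mul_pos hκpos hl).le]
      · rw [hyt, show (q - κ * ρ + (q + ρ))/2 = q + (ρ - κ * ρ)/2 by ring,
          show (q + ρ - (q - κ * ρ))/2 = (ρ + κ * ρ)/2 by ring,
          show q - (q + (ρ - κ * ρ)/2) = -((ρ - κ * ρ)/2) by ring,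
          abs_neg, abs_of_nonneg (by
            linarith [mul_le_mul_of_nonneg_right hκhalf hl.le] : (0:ℝ) ≤ (ρ - κ * ρ)/2)]
        have hmul := mul_le_mul_of_nonneg_right (le_of_eq hκeq) hl.le
        nlinarith [hmul]
  -- Bound 2
  have hx12 : x₁ ≤ x₂ := by linarith
  have hB2 : ∫ s in x₁..x₂, f s ≤ (ntMax α f r - δ) * (x₂ - x₁) := by
    rw [intervalIntegral.integral_of_le hx12]
    have hfint : IntegrableOn f (Set.Ioc x₁ x₂) volume :=
      (ntAux_intable hm hf0 hC x₁ x₂).1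
    have hcint : IntegrableOn (fun _ : ℝ => ntMax α f r - δ) (Set.Ioc x₁ x₂) volume :=
      integrableOn_const measure_Ioc_lt_top.ne
    have hae : f ≤ᵐ[volume.restrict (Set.Ioc x₁ x₂)] fun _ => ntMax α f r - δ := by
      refine (ae_restrict_iff' measurableSet_Ioc).2 ?_
      rw [Filter.eventually_iff, mem_ae_iff]
      have hsub : {z : ℝ | z ∈ Set.Ioc x₁ x₂ → f z ≤ ntMax α f r - δ}ᶜ ⊆ ({q} : Set ℝ) := by
        intro z hz
        simp only [Set.mem_compl_iff, Set.mem_setOf_eq, not_forall] at hz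
        obtain ⟨hzIoc, hzgt⟩ := hz
        simp only [Set.mem_singleton_iff]
        by_contra hzq
        have hz1 : p < z := lt_of_le_of_lt hx1p hzIoc.1
        have hz2 : z < q := lt_of_le_of_ne (le_trans hzIoc.2 hx2q) hzq
        exact hzgt (le_of_lt (hcon z hz1 hz2))
      exact measure_mono_null hsub (measure_singleton q)
    have := setIntegral_mono_ae_restrict hfint hcint hae
    rw [setIntegral_const, Real.volume_real_Ioc_of_le hx12, smul_eq_mul] at this
    linarith [this]
  -- splitting
  have hi1 := ntAux_intable hm hf0 hC (y - t) x₁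
  have hi2 := ntAux_intable hm hf0 hC x₁ x₂
  have hi3 := ntAux_intable hm hf0 hC x₂ (y + t)
  have hsplit : (∫ s in (y - t)..x₁, f s) + (∫ s in x₁..x₂, f s) + (∫ s in x₂..(y + t), f s)
      = ∫ s in (y - t)..(y + t), f s := by
    rw [intervalIntegral.integral_add_adjacent_intervals hi1 hi2]
    exact intervalIntegral.integral_add_adjacent_intervals (hi1.trans hi2) hi3
  -- final contradiction
  have hL1 : (0:ℝ) ≤ x₁ - (y - t) := by linarith
  have hL2 : (0:ℝ) ≤ x₂ - x₁ := by linarith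
  have hL3 : (0:ℝ) ≤ (y + t) - x₂ := by linarith
  have e1 : ntMax α f p * (x₁ - (y - t)) ≤ (A - δ') * (x₁ - (y - t)) :=
    mul_le_mul_of_nonneg_right hupA hL1
  have e2 : (ntMax α f r - δ) * (x₂ - x₁) ≤ (A - δ') * (x₂ - x₁) :=
    mul_le_mul_of_nonneg_right hcA hL2
  have e3 : ntMax α f q * ((y + t) - x₂) ≤ (A - δ') * ((y + t) - x₂) :=
    mul_le_mul_of_nonneg_right huqA hL3
  have hsum : A * (2 * t) ≤ (A - δ') * (2 * t) := by
    have : (A - δ') * (x₁ - (y - t)) + (A - δ') * (x₂ - x₁) + (A - δ') * ((y + t) - x₂)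
        = (A - δ') * (2 * t) := by ring
    linarith [hB1, hB2, hB3, e1, e2, e3, hsplit, hIA]
  nlinarith [hsum, hδ'pos, h2t]
end NtAux

/-- Given a system of peaks `p_0 < r_0 < p_1 < … < r_n < p_{n+1}` for `M^α f` and `δ > 0`,
there is a system of peaks `a_0 < b_0 < a_1 < … < b_n < a_{n+1}` for `f` with
`f(a_i) ≤ M^α f(p_i)` and `f(b_i) ≥ M^α f(r_i) − δ`; in particular the peak variation of
`M^α f` is at most the peak variation of `f` plus `2(n+1)δ`. -/
theorem ntMax_main_claim (f : ℝ → ℝ) (hf0 : ∀ x, 0 ≤ f x) (hm : Measurable f)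
    (hbv : eVariationOn f Set.univ ≠ ⊤) (α : ℝ) (hα : 1 / 3 ≤ α)
    (n : ℕ) (p r : ℕ → ℝ)
    (horder : ∀ i ≤ n, p i < r i ∧ r i < p (i + 1))
    (hpeak : ∀ i ≤ n, ntMax α f (p i) < ntMax α f (r i) ∧
      ntMax α f (p (i + 1)) < ntMax α f (r i))
    (δ : ℝ) (hδ : 0 < δ) :
    ∃ a b : ℕ → ℝ,
      (∀ i ≤ n, a i < b i ∧ b i < a (i + 1)) ∧
      (∀ i ≤ n + 1, f (a i) ≤ ntMax α f (p i)) ∧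
      (∀ i ≤ n, ntMax α f (r i) - δ ≤ f (b i)) ∧
      ∑ i ∈ Finset.range (n + 1),
          (2 * ntMax α f (r i) - ntMax α f (p i) - ntMax α f (p (i + 1))) ≤
        (∑ i ∈ Finset.range (n + 1), (2 * f (b i) - f (a i) - f (a (i + 1)))) +
          2 * (n + 1) * δ := by
  obtain ⟨C, hC⟩ := ntAux_bound hbv
  have hα0 : 0 < α := by linarith
  have hbex : ∀ i, i ≤ n → ∃ b, p i < b ∧ b < p (i+1) ∧ ntMax α f (r i) - δ ≤ f b :=
    fun i hi => ntAux_claimC hm hα hf0 hC (horder i hi).1 (horder i hi).2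
      (hpeak i hi).1 (hpeak i hi).2 hδ
  classical
  set b : ℕ → ℝ := fun i => if h : i ≤ n then (hbex i h).choose else 0 with hbdef
  have hb : ∀ i, i ≤ n → p i < b i ∧ b i < p (i+1) ∧ ntMax α f (r i) - δ ≤ f (b i) := by
    intro i hi
    simp only [hbdef, dif_pos hi]
    exact (hbex i hi).choose_spec
  set gl : ℕ → ℝ := fun i => Nat.casesOn i 1 (fun j => p (j+1) - b j) with hgldef
  set gr : ℕ → ℝ := fun i => if i ≤ n then b i - p i else 1 with hgrdef
  set s : ℕ → ℝ := fun i => min (gl i) (gr i) with hsdef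
  have hglpos : ∀ i, i ≤ n + 1 → 0 < gl i := by
    intro i hi
    match i with
    | 0 => exact one_pos
    | (j+1) =>
      have hj : j ≤ n := Nat.lt_succ_iff.1 (Nat.lt_of_succ_le hi)
      have := (hb j hj).2.1
      show (0:ℝ) < p (j+1) - b j
      linarith
  have hgrpos : ∀ i, 0 < gr i := by
    intro i
    by_cases hi : i ≤ n
    · simp only [hgrdef, if_pos hi]; linarith [(hb i hi).1]
    · simp only [hgrdef, if_neg hi]; exact one_pos
  have hspos : ∀ i, i ≤ n + 1 → 0 < s i := fun i hi =>
    lt_min (hglpos i hi) (hgrpos i)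
  set a : ℕ → ℝ := fun i => if h : i ≤ n + 1 then
    (ntAux_small hm hα0 hf0 hC (p i) (s i) (hspos i h)).choose else 0 with hadef
  have ha : ∀ i, i ≤ n + 1 →
      p i - s i < a i ∧ a i < p i + s i ∧ f (a i) ≤ ntMax α f (p i) := by
    intro i hi
    simp only [hadef, dif_pos hi]
    exact (ntAux_small hm hα0 hf0 hC (p i) (s i) (hspos i hi)).choose_spec
  refine ⟨a, b, ?_, ?_, ?_, ?_⟩
  · intro i hi
    constructor
    · have h1 := (ha i (le_trans hi (Nat.le_succ n))).2.1
      have h2 : s i ≤ gr i := min_le_right _ _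
      have h3 : gr i = b i - p i := by simp only [hgrdef, if_pos hi]
      linarith
    · have h1 := (ha (i+1) (Nat.succ_le_succ hi)).1
      have h2 : s (i+1) ≤ gl (i+1) := min_le_left _ _
      have h3 : gl (i+1) = p (i+1) - b i := rfl
      linarith
  · exact fun i hi => (ha i hi).2.2
  · exact fun i hi => (hb i hi).2.2
  · have hterm : ∀ i ∈ Finset.range (n+1),
        2 * ntMax α f (r i) - ntMax α f (p i) - ntMax α f (p (i + 1)) ≤
        2 * f (b i) - f (a i) - f (a (i + 1)) + 2 * δ := by
      intro i hi
      rw [Finset.mem_range] at hi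
      have hin : i ≤ n := Nat.lt_succ_iff.1 hi
      have h1 := (hb i hin).2.2
      have h2 := (ha i (le_trans hin (Nat.le_succ n))).2.2
      have h3 := (ha (i+1) (Nat.succ_le_succ hin)).2.2
      linarith
    have hsum := Finset.sum_le_sum hterm
    rw [Finset.sum_add_distrib, Finset.sum_const, Finset.card_range] at hsum
    have hns : (n + 1) • (2*δ) = 2 * ((n:ℝ) + 1) * δ := by
      rw [nsmul_eq_mul]; push_cast; ring
    rw [hns] at hsum
    convert hsum using 2 <;> push_cast <;> ring
end
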